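/- arXiv:2501.00161 — 2 statements merged into one kernel-verified Lean document; each statement's English description precedes it below -/
import Mathlib

section
/- Let G be a subdivision of the complete graph K_4. Then the Full House K̂4 is not an induced minor of G. -/
/-- `X` is an induced minor model of `H` in `G`: the bags are nonempty, pairwise
disjoint, each induces a connected subgraph of `G`, and two distinct bags are joined
by an edge of `G` iff the corresponding vertices are adjacent in `H`. -/
def IsIMModel {V W : Type} (G : SimpleGraph V) (H : SimpleGraph W) (X : W → Set V) : Prop :=
  (∀ u, (X u).Nonempty) ∧
  (∀ u v : W, u ≠ v → Disjoint (X u) (X v)) ∧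
  (∀ u, (G.induce (X u)).Connected) ∧
  (∀ u v : W, u ≠ v → ((∃ x ∈ X u, ∃ y ∈ X v, G.Adj x y) ↔ H.Adj u v))

/-- `H` is an induced minor of `G`. -/
def IsInducedMinor {V W : Type} (H : SimpleGraph W) (G : SimpleGraph V) : Prop :=
  ∃ X : W → Set V, IsIMModel G H X

/-- `H` is an induced subgraph of `G`. -/
def IsInducedSubgraph {V W : Type} (H : SimpleGraph W) (G : SimpleGraph V) : Prop :=
  ∃ f : W → V, Function.Injective f ∧ ∀ x y : W, G.Adj (f x) (f y) ↔ H.Adj x y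

/-- The bag `X u` is minimal: replacing it by any proper subset never yields again an
induced minor model of `H` in `G`. -/
def MinimalBag {V W : Type} [DecidableEq W] (G : SimpleGraph V) (H : SimpleGraph W)
    (X : W → Set V) (u : W) : Prop :=
  ∀ Y : Set V, Y ⊂ X u → ¬ IsIMModel G H (Function.update X u Y)

/-- The graph obtained from the graph on `U` with edges `E 0, …, E (m-1)` by replacing
the edge `E i` by a path with `n i` internal (subdivision) vertices; for `n i = 0` the
edge `E i` is kept as it is. This produces exactly the subdivisions of that graph. -/
def subdivGraph {U : Type} (m : ℕ) (E : Fin m → U × U) (n : Fin m → ℕ) :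
    SimpleGraph (U ⊕ Σ i : Fin m, Fin (n i)) :=
  SimpleGraph.fromRel fun x y =>
    (∃ i : Fin m, n i = 0 ∧ x = Sum.inl (E i).1 ∧ y = Sum.inl (E i).2) ∨
    (∃ (i : Fin m) (j : Fin (n i)), (j : ℕ) = 0 ∧
      x = Sum.inl (E i).1 ∧ y = Sum.inr ⟨i, j⟩) ∨
    (∃ (i : Fin m) (j : Fin (n i)), (j : ℕ) = n i - 1 ∧
      x = Sum.inr ⟨i, j⟩ ∧ y = Sum.inl (E i).2) ∨
    (∃ (i : Fin m) (j k : Fin (n i)), (j : ℕ) + 1 = (k : ℕ) ∧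
      x = Sum.inr ⟨i, j⟩ ∧ y = Sum.inr ⟨i, k⟩)

/-- The Full House `K̂₄`: the complete graph on the vertices `0, 1, 2, 3` together with
the vertex `4` adjacent exactly to `0` and `1`. -/
def fullHouse : SimpleGraph (Fin 5) :=
  SimpleGraph.fromRel fun x y =>
    ((x : ℕ) < 4 ∧ (y : ℕ) < 4) ∨ (x = 4 ∧ (y = 0 ∨ y = 1))

/-- The edges of the complete graph `K₄` on `Fin 4`. -/
def k4Edges : Fin 6 → Fin 4 × Fin 4 :=
  ![(0, 1), (0, 2), (0, 3), (1, 2), (1, 3), (2, 3)]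

open Finset

namespace StmtAux

lemma conn_card_le {α : Type} [Fintype α] (H : SimpleGraph α) [Fintype H.edgeSet]
    (hc : H.Connected) :
    Fintype.card α ≤ H.edgeFinset.card + 1 := by
  classical
  obtain ⟨r⟩ := hc.nonempty
  have hnext : ∀ v : α, v ≠ r → ∃ u, H.Adj v u ∧ H.dist u r < H.dist v r := by
    intro v hv
    have hr : H.Reachable v r := hc.preconnected v r
    obtain ⟨p, hp⟩ := hr.exists_walk_length_eq_dist
    cases p with
    | nil => exact absurd rfl hv
    | cons h q =>
      rename_i u
      refine ⟨u, h, ?_⟩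
      have h1 : H.dist u r ≤ q.length := SimpleGraph.dist_le q
      simp [SimpleGraph.Walk.length_cons] at hp
      omega
  choose nxt hadj hlt using hnext
  have hinj : Set.InjOn (fun v : α => if hv : v = r then (Sym2.mk v v) else Sym2.mk v (nxt v hv))
      ↑(univ.erase r) := by
    intro a ha b hb hab
    simp only [mem_coe, mem_erase] at ha hb
    dsimp only at hab
    rw [dif_neg ha.1, dif_neg hb.1] at hab
    replace hab := (Sym2.mk_eq_mk_iff (p := (a, nxt a ha.1)) (q := (b, nxt b hb.1))).mp hab
    rcases hab with h | h
    · exact (Prod.ext_iff.mp h).1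
    · obtain ⟨h1, h2⟩ := Prod.ext_iff.mp h
      dsimp at h1 h2
      have := hlt a ha.1
      have := hlt b hb.1
      subst h1
      rw [h2] at *
      omega
  have hmem : ∀ v ∈ univ.erase r,
      (if hv : v = r then (Sym2.mk v v) else Sym2.mk v (nxt v hv)) ∈ H.edgeFinset := by
    intro v hv
    rw [mem_erase] at hv
    rw [dif_neg hv.1]
    exact SimpleGraph.mem_edgeFinset.mpr (hadj v hv.1)
  have := Finset.card_le_card_of_injOn _ hmem hinj
  rw [Finset.card_erase_of_mem (mem_univ r)] at this
  simp only [Finset.card_univ] at this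
  omega

variable (n : Fin 6 → ℕ)

abbrev W0 (n : Fin 6 → ℕ) := Fin 4 ⊕ Σ i : Fin 6, Fin (n i)

def ep (a : Fin 4) (i : Fin 6) : W0 n :=
  if (k4Edges i).1 = a then
    (if h : n i = 0 then Sum.inl (k4Edges i).2
     else Sum.inr ⟨i, ⟨0, Nat.pos_of_ne_zero h⟩⟩)
  else
    (if h : n i = 0 then Sum.inl (k4Edges i).1
     else Sum.inr ⟨i, ⟨n i - 1, Nat.sub_lt (Nat.pos_of_ne_zero h) one_pos⟩⟩)

def tg : W0 n → Finset (W0 n)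
  | Sum.inl a => (univ.filter fun i => (k4Edges i).1 = a ∨ (k4Edges i).2 = a).image (ep n a)
  | Sum.inr ⟨i, j⟩ =>
      {(if _h : (j : ℕ) = 0 then Sum.inl (k4Edges i).1
        else Sum.inr ⟨i, ⟨(j : ℕ) - 1, lt_of_le_of_lt (Nat.sub_le _ _) j.isLt⟩⟩),
       (if _h : (j : ℕ) = n i - 1 then Sum.inl (k4Edges i).2
        else Sum.inr ⟨i, ⟨(j : ℕ) + 1, by have := j.isLt; omega⟩⟩)}

lemma k4_ne : ∀ i, (k4Edges i).1 ≠ (k4Edges i).2 := by decide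

lemma adj_mem_tg (w z : W0 n) (h : (subdivGraph 6 k4Edges n).Adj w z) : z ∈ tg n w := by
  rw [subdivGraph, SimpleGraph.fromRel_adj] at h
  obtain ⟨hne, h | h⟩ := h
  · rcases h with ⟨i, hi0, hw, hz⟩ | ⟨i, j, hj0, hw, hz⟩ | ⟨i, j, hjl, hw, hz⟩ |
      ⟨i, j, k, hjk, hw, hz⟩
    · subst hw hz
      simp only [tg, mem_image, mem_filter]
      exact ⟨i, ⟨mem_univ i, Or.inl rfl⟩, by rw [ep, if_pos rfl, dif_pos hi0]⟩
    · subst hw hz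
      simp only [tg, mem_image, mem_filter]
      refine ⟨i, ⟨mem_univ i, Or.inl rfl⟩, ?_⟩
      rw [ep, if_pos rfl, dif_neg (Nat.pos_iff_ne_zero.mp j.pos)]
      exact congrArg _ (congrArg _ (Fin.ext hj0.symm))
    · subst hw hz
      simp only [tg, mem_insert, mem_singleton]
      right; rw [dif_pos hjl]
    · subst hw hz
      simp only [tg, mem_insert, mem_singleton]
      right
      have hk := k.isLt
      rw [dif_neg (by omega : ¬ (j : ℕ) = n i - 1)]
      exact congrArg _ (congrArg _ (Fin.ext hjk.symm))
  · rcases h with ⟨i, hi0, hz, hw⟩ | ⟨i, j, hj0, hz, hw⟩ | ⟨i, j, hjl, hz, hw⟩ |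
      ⟨i, j, k, hjk, hz, hw⟩
    · subst hw hz
      simp only [tg, mem_image, mem_filter]
      exact ⟨i, ⟨mem_univ i, Or.inr rfl⟩, by rw [ep, if_neg (k4_ne i), dif_pos hi0]⟩
    · subst hw hz
      simp only [tg, mem_insert, mem_singleton]
      left; rw [dif_pos hj0]
    · subst hw hz
      simp only [tg, mem_image, mem_filter]
      refine ⟨i, ⟨mem_univ i, Or.inr rfl⟩, ?_⟩
      rw [ep, if_neg (k4_ne i), dif_neg (Nat.pos_iff_ne_zero.mp j.pos)]
      exact congrArg _ (congrArg _ (Fin.ext hjl.symm))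
    · subst hw hz
      simp only [tg, mem_insert, mem_singleton]
      left
      rw [dif_neg (by omega : ¬ (k : ℕ) = 0)]
      exact congrArg _ (congrArg _ (Fin.ext (by show (j:ℕ) = (k:ℕ) - 1; omega)))

lemma k4_card : ∀ a : Fin 4,
    (univ.filter fun i => (k4Edges i).1 = a ∨ (k4Edges i).2 = a).card = 3 := by decide

def wt : W0 n → ℕ
  | Sum.inl _ => 3
  | Sum.inr _ => 2

lemma tg_card_le (w : W0 n) : (tg n w).card ≤ wt n w := by
  match w with
  | Sum.inl a =>
    calc (tg n (Sum.inl a)).card ≤ _ := Finset.card_image_le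
    _ = 3 := k4_card a
  | Sum.inr ⟨i, j⟩ =>
    calc (tg n (Sum.inr ⟨i, j⟩)).card ≤ _ + 1 := Finset.card_insert_le _ _
    _ ≤ 2 := by simp

lemma wt_eq (w : W0 n) : wt n w = 2 + (if w.isLeft then 1 else 0) := by
  cases w <;> simp [wt]

end StmtAux

/-- Let `G` be a subdivision of `K₄`. Then the Full House is not an induced minor of `G`. -/
theorem stmt15 {V : Type} [Fintype V] (G : SimpleGraph V) (n : Fin 6 → ℕ)
    (iso : G ≃g subdivGraph 6 k4Edges n) :
    ¬ IsInducedMinor fullHouse G := by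
  classical
  rintro ⟨X, hXne, hXdisj, hXconn, hXadj⟩
  open StmtAux in
  -- finite sets
  set S : Finset V := univ.filter (fun x => ∃ u, x ∈ X u) with hS
  set c : Fin 5 → ℕ := fun u => (X u).toFinset.card with hc
  set D : Fin 5 × Fin 5 → Finset (V × V) :=
    fun p => univ.filter (fun q => q.1 ∈ X p.1 ∧ q.2 ∈ X p.2 ∧ G.Adj q.1 q.2) with hD
  set Dt : Finset (V × V) := univ.filter (fun q => q.1 ∈ S ∧ q.2 ∈ S ∧ G.Adj q.1 q.2) with hDt
  -- Step 1 : S.card = ∑ c u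
  have hScard : S.card = ∑ u : Fin 5, c u := by
    have : S = univ.biUnion (fun u : Fin 5 => (X u).toFinset) := by
      ext x; simp [hS]
    rw [this]
    rw [Finset.card_biUnion]
    intro u _ v _ huv
    simpa [Set.disjoint_toFinset] using hXdisj u v huv
  -- Step 2 : per-bag lower bound
  have hdiag : ∀ u : Fin 5, 2 * c u ≤ (D (u, u)).card + 2 := by
    intro u
    have hcard : Fintype.card (X u) ≤ (G.induce (X u)).edgeFinset.card + 1 :=
      conn_card_le _ (hXconn u)
    have hbij : 2 * (G.induce (X u)).edgeFinset.card = (D (u, u)).card := by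
      rw [SimpleGraph.two_mul_card_edgeFinset]
      apply Finset.card_bij (fun p _ => ((p.1 : V), (p.2 : V)))
      · rintro ⟨a, b⟩ hp
        simp only [mem_filter, mem_univ, true_and] at hp
        simp only [hD, mem_filter, mem_univ, true_and]
        exact ⟨a.2, b.2, hp⟩
      · rintro ⟨a, b⟩ _ ⟨a', b'⟩ _ h
        obtain ⟨h1, h2⟩ := Prod.ext_iff.mp h
        exact Prod.ext (Subtype.ext h1) (Subtype.ext h2)
      · intro q hq
        simp only [hD, mem_filter, mem_univ, true_and] at hq
        refine ⟨(⟨q.1, hq.1⟩, ⟨q.2, hq.2.1⟩), ?_, rfl⟩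
        simp only [mem_filter, mem_univ, true_and]
        exact hq.2.2
    have hcu : c u = Fintype.card (X u) := by
      simp [hc, Set.toFinset_card]
    omega
  -- Step 3 : cross bounds
  have hcross : ∀ p : Fin 5 × Fin 5, fullHouse.Adj p.1 p.2 → 1 ≤ (D p).card := by
    rintro ⟨u, v⟩ hadj
    obtain ⟨x, hx, y, hy, hxy⟩ := (hXadj u v hadj.ne).mpr hadj
    exact Finset.card_pos.mpr ⟨(x, y), by simp [hD, hx, hy, hxy]⟩
  -- Step 4 : the D p are disjoint pieces of Dt
  have hsum_le : ∑ p : Fin 5 × Fin 5, (D p).card ≤ Dt.card := by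
    rw [← Finset.card_biUnion]
    · apply Finset.card_le_card
      intro q hq
      simp only [mem_biUnion] at hq
      obtain ⟨p, _, hp⟩ := hq
      simp only [hD, mem_filter, mem_univ, true_and] at hp
      simp only [hDt, hS, mem_filter, mem_univ, true_and]
      exact ⟨⟨p.1, hp.1⟩, ⟨p.2, hp.2.1⟩, hp.2.2⟩
    · intro p _ p' _ hpp'
      rw [Function.onFun, Finset.disjoint_left]
      intro q hq hq'
      simp only [hD, mem_filter, mem_univ, true_and] at hq hq'
      by_cases h1 : p.1 = p'.1
      · have h2 : p.2 ≠ p'.2 := fun h2 => hpp' (Prod.ext h1 h2)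
        exact Set.disjoint_left.mp (hXdisj _ _ h2) hq.2.1 hq'.2.1
      · exact Set.disjoint_left.mp (hXdisj _ _ h1) hq.1 hq'.1
  -- Step 5 : lower bound for the sum
  have hadjF : (univ.filter (fun p : Fin 5 × Fin 5 => fullHouse.Adj p.1 p.2)).card = 16 := by
    have : (univ.filter (fun p : Fin 5 × Fin 5 => fullHouse.Adj p.1 p.2)) =
        univ.filter (fun p : Fin 5 × Fin 5 => p.1 ≠ p.2 ∧
          ((((p.1 : ℕ) < 4 ∧ (p.2 : ℕ) < 4) ∨ (p.1 = 4 ∧ (p.2 = 0 ∨ p.2 = 1))) ∨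
           (((p.2 : ℕ) < 4 ∧ (p.1 : ℕ) < 4) ∨ (p.2 = 4 ∧ (p.1 = 0 ∨ p.1 = 1))))) := by
      ext p
      simp [fullHouse, SimpleGraph.fromRel_adj]
    rw [this]
    decide
  have hlow : ∑ u : Fin 5, (D (u, u)).card + 16 ≤ ∑ p : Fin 5 × Fin 5, (D p).card := by
    have hsubset : (univ.image (fun u : Fin 5 => (u, u))) ∪
        (univ.filter (fun p : Fin 5 × Fin 5 => fullHouse.Adj p.1 p.2)) ⊆ univ :=
      Finset.subset_univ _
    have hdisjF : Disjoint (univ.image (fun u : Fin 5 => (u, u)))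
        (univ.filter (fun p : Fin 5 × Fin 5 => fullHouse.Adj p.1 p.2)) := by
      rw [Finset.disjoint_left]
      intro p hp hp'
      simp only [mem_image] at hp
      obtain ⟨u, _, rfl⟩ := hp
      simp only [mem_filter] at hp'
      exact hp'.2.ne rfl
    calc ∑ u : Fin 5, (D (u, u)).card + 16
        = ∑ p ∈ univ.image (fun u : Fin 5 => (u, u)), (D p).card +
          ∑ p ∈ univ.filter (fun p : Fin 5 × Fin 5 => fullHouse.Adj p.1 p.2), 1 := by
          rw [Finset.sum_image (by intro u _ v _ h; exact (Prod.ext_iff.mp h).1),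
            Finset.sum_const, smul_eq_mul, mul_one, hadjF]
      _ ≤ ∑ p ∈ univ.image (fun u : Fin 5 => (u, u)), (D p).card +
          ∑ p ∈ univ.filter (fun p : Fin 5 × Fin 5 => fullHouse.Adj p.1 p.2), (D p).card := by
          gcongr with p hp
          exact hcross p (Finset.mem_filter.mp hp).2
      _ = ∑ p ∈ (univ.image (fun u : Fin 5 => (u, u))) ∪
            (univ.filter (fun p : Fin 5 × Fin 5 => fullHouse.Adj p.1 p.2)), (D p).card :=
          (Finset.sum_union hdisjF).symm
      _ ≤ ∑ p : Fin 5 × Fin 5, (D p).card :=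
          Finset.sum_le_sum_of_subset hsubset
  -- Step 6 : upper bound for Dt
  have hup : Dt.card ≤ 2 * S.card + 4 := by
    have hDtb : Dt = S.biUnion (fun x => (S.filter (fun y => G.Adj x y)).image (Prod.mk x)) := by
      ext q
      simp only [hDt, mem_filter, mem_univ, true_and, mem_biUnion, mem_image]
      constructor
      · rintro ⟨h1, h2, h3⟩
        exact ⟨q.1, h1, q.2, ⟨h2, h3⟩, rfl⟩
      · rintro ⟨x, hx, y, hy, rfl⟩
        exact ⟨hx, hy.1, hy.2⟩
    rw [hDtb, Finset.card_biUnion (by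
      intro x _ x' _ hxx'
      rw [Function.onFun, Finset.disjoint_left]
      rintro q hq hq'
      simp only [mem_image] at hq hq'
      obtain ⟨y, _, rfl⟩ := hq
      obtain ⟨y', _, h⟩ := hq'
      exact hxx' ((Prod.ext_iff.mp h).1.symm))]
    have hperx : ∀ x ∈ S, ((S.filter (fun y => G.Adj x y)).image (Prod.mk x)).card ≤
        wt n (iso x) := by
      intro x _
      rw [Finset.card_image_of_injective _ (Prod.mk_right_injective x)]
      refine le_trans (Finset.card_le_card_of_injOn (fun y => iso y) ?_
        (fun a _ b _ h => iso.injective h)) (tg_card_le n (iso x))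
      intro y hy
      simp only [mem_coe, mem_filter] at hy
      exact adj_mem_tg n _ _ (iso.map_rel_iff.mpr hy.2)
    calc (∑ x ∈ S, ((S.filter (fun y => G.Adj x y)).image (Prod.mk x)).card)
        ≤ ∑ x ∈ S, wt n (iso x) := Finset.sum_le_sum hperx
      _ = ∑ x ∈ S, (2 + (if (iso x).isLeft then 1 else 0)) := by
          apply Finset.sum_congr rfl; intro x _; exact wt_eq n _
      _ = 2 * S.card + ∑ x ∈ S, (if (iso x).isLeft then 1 else 0) := by
          rw [Finset.sum_add_distrib, Finset.sum_const, smul_eq_mul, mul_comm]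
      _ ≤ 2 * S.card + 4 := by
          gcongr
          rw [Finset.sum_boole]
          calc (S.filter (fun x => (iso x).isLeft = true)).card
              ≤ ((univ : Finset (Fin 4)).image (fun a => (Sum.inl a : W0 n))).card := by
                apply Finset.card_le_card_of_injOn (fun x => iso x)
                · intro x hx
                  simp only [mem_coe, mem_filter] at hx
                  obtain ⟨a, ha⟩ := Sum.isLeft_iff.mp hx.2
                  simp only [mem_coe, mem_image]
                  exact ⟨a, mem_univ a, ha.symm⟩
                · exact fun a _ b _ h => iso.injective h
            _ = 4 := by
                rw [Finset.card_image_of_injective _ Sum.inl_injective]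
                simp
  -- combine
  have h1 : ∑ u : Fin 5, 2 * c u ≤ ∑ u : Fin 5, ((D (u, u)).card + 2) :=
    Finset.sum_le_sum (fun u _ => hdiag u)
  rw [Finset.sum_add_distrib, Finset.sum_const] at h1
  rw [← Finset.mul_sum, ← hScard] at h1
  simp only [Finset.card_univ, Fintype.card_fin, smul_eq_mul, mul_one] at h1
  omega
end

section
/- Let G be a graph whose vertex set is partitioned into sets C and I such that the subgraph of G induced by C is a cycle, I is an independent set, and every vertex of I has the same neighborhood, which is contained in C. Then the Full House K̂4 is an induced minor of G if and only if |I| ≥ 2 and at least one of the following holds: (i) some vertex of C has no neighbor in I, |C| ≥ 4, and every vertex of I has degree at least 3; (ii) every vertex of C has a neighbor in I and |C| ≥ 5. -/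
lemma nbr_pair {V : Type} [Fintype V] (G : SimpleGraph V) {C : Set V}
    (hdeg : ∀ x ∈ C, {y | y ∈ C ∧ G.Adj x y}.ncard = 2)
    {x a b : V} (hx : x ∈ C) (ha : a ∈ C) (hb : b ∈ C) (hab : a ≠ b)
    (haa : G.Adj x a) (hba : G.Adj x b) :
    {y | y ∈ C ∧ G.Adj x y} = {a, b} := by
  symm
  apply Set.eq_of_subset_of_ncard_le
  · rintro y (rfl | rfl)
    · exact ⟨ha, haa⟩
    · exact ⟨hb, hba⟩
  · rw [hdeg x hx, Set.ncard_pair hab]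
  · exact Set.toFinite _

lemma closed_connected_eq {V : Type} (G : SimpleGraph V) {C S : Set V}
    (hconn : (G.induce C).Connected) (hSC : S ⊆ C) {v0 : V} (hv0 : v0 ∈ S)
    (hclosed : ∀ x ∈ S, ∀ y ∈ C, G.Adj x y → y ∈ S) : C ⊆ S := by
  intro v hv
  suffices H : ∀ (u w : ↥C) (_ : (G.induce C).Walk u w), u.val ∈ S → w.val ∈ S by
    obtain ⟨w⟩ := hconn.preconnected ⟨v0, hSC hv0⟩ ⟨v, hv⟩
    exact H _ _ w hv0
  intro u w p
  induction p with
  | nil => exact id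
  | @cons a b _ hadj p ih => exact fun ha => ih (hclosed a ha b b.2 hadj)

lemma cycle_label {V : Type} [Fintype V] (G : SimpleGraph V) {C : Set V}
    (hCconn : (G.induce C).Connected)
    (hdeg : ∀ x ∈ C, {y | y ∈ C ∧ G.Adj x y}.ncard = 2)
    {v0 : V} (hv0 : v0 ∈ C) :
    ∃ f : ℕ → V, f 0 = v0 ∧ f C.ncard = v0 ∧ (∀ i, f i ∈ C) ∧
      (∀ i j, i < C.ncard → j < C.ncard → f i = f j → i = j) ∧
      (∀ v ∈ C, ∃ i < C.ncard, f i = v) ∧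
      (∀ i, G.Adj (f i) (f (i+1))) ∧
      (∀ i j, i < C.ncard → j < C.ncard → G.Adj (f i) (f j) →
        (j = i + 1 ∨ i = j + 1 ∨ (i = 0 ∧ j = C.ncard - 1) ∨ (j = 0 ∧ i = C.ncard - 1))) := by
  classical
  -- the step function
  have hstep : ∀ cur prev : V, ∃ nxt : V, cur ∈ C → prev ∈ C → G.Adj cur prev →
      (nxt ∈ C ∧ G.Adj cur nxt ∧ nxt ≠ prev) := by
    intro cur prev
    by_cases h : cur ∈ C ∧ prev ∈ C ∧ G.Adj cur prev
    · obtain ⟨hc, hp, hadj⟩ := h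
      obtain ⟨a, b, hab, hset⟩ := Set.ncard_eq_two.mp (hdeg cur hc)
      have hprev : prev ∈ ({a, b} : Set V) := hset ▸ ⟨hp, hadj⟩
      rcases hprev with rfl | rfl
      · refine ⟨b, fun _ _ _ => ?_⟩
        have hb : b ∈ {y | y ∈ C ∧ G.Adj cur y} := hset ▸ (by right; rfl)
        exact ⟨hb.1, hb.2, hab.symm⟩
      · refine ⟨a, fun _ _ _ => ?_⟩
        have ha : a ∈ {y | y ∈ C ∧ G.Adj cur y} := hset ▸ (by left; rfl)
        exact ⟨ha.1, ha.2, hab⟩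
    · exact ⟨cur, fun h1 h2 h3 => absurd ⟨h1, h2, h3⟩ h⟩
  choose step hstepspec using hstep
  -- first neighbor
  have hnn : {y | y ∈ C ∧ G.Adj v0 y}.Nonempty := by
    apply Set.nonempty_of_ncard_ne_zero; rw [hdeg v0 hv0]; omega
  obtain ⟨u0, hu0C, hu0adj⟩ := hnn
  -- the walk
  set s : ℕ → V × V := fun k => Nat.rec (v0, u0) (fun _ p => (p.2, step p.2 p.1)) k with hs_def
  set f : ℕ → V := fun k => (s k).1 with hf_def
  have hf0 : f 0 = v0 := rfl
  have hfs : ∀ k, f (k+1) = (s k).2 := fun k => rfl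
  have hstep2 : ∀ k, f (k+2) = step (f (k+1)) (f k) := fun k => rfl
  -- invariant
  have inv : ∀ k, f k ∈ C ∧ f (k+1) ∈ C ∧ G.Adj (f k) (f (k+1)) ∧ f (k+2) ≠ f k := by
    intro k
    induction k with
    | zero =>
        refine ⟨hv0, hu0C, hu0adj, ?_⟩
        have := (hstepspec u0 v0 hu0C hv0 hu0adj.symm).2.2
        exact this
    | succ k ih =>
        obtain ⟨h1, h2, h3, h4⟩ := ih
        have hspec := hstepspec (f (k+1)) (f k) h2 h1 h3.symm
        rw [← hstep2 k] at hspec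
        refine ⟨h2, hspec.1, hspec.2.1, ?_⟩
        have hspec2 := hstepspec (f (k+2)) (f (k+1)) hspec.1 h2 hspec.2.1.symm
        rw [← hstep2 (k+1)] at hspec2
        exact hspec2.2.2
  have hfC : ∀ i, f i ∈ C := fun i => (inv i).1
  have hadjf : ∀ i, G.Adj (f i) (f (i+1)) := fun i => (inv i).2.2.1
  -- pigeonhole: a repeat exists
  have hCfin : C.Finite := Set.toFinite C
  have hex : ∃ m, ∃ i, i < m ∧ f i = f m := by
    have hmaps : ∀ i ∈ Finset.range (C.ncard + 1), f i ∈ hCfin.toFinset := by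
      intro i _; simpa using hfC i
    have hcard : hCfin.toFinset.card < (Finset.range (C.ncard + 1)).card := by
      rw [Finset.card_range, ← Set.ncard_eq_toFinset_card _ hCfin]; omega
    obtain ⟨i, hi, j, hj, hne, heq⟩ :=
      Finset.exists_ne_map_eq_of_card_lt_of_maps_to hcard hmaps
    rcases Nat.lt_or_ge i j with h | h
    · exact ⟨j, i, h, heq⟩
    · exact ⟨i, j, by omega, heq.symm⟩
  obtain ⟨m, ⟨i0, hi0m, hi0eq⟩, hmin⟩ :
      ∃ m, (∃ i, i < m ∧ f i = f m) ∧ ∀ k, k < m → ¬∃ i, i < k ∧ f i = f k :=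
    ⟨Nat.find hex, Nat.find_spec hex, fun k hk => Nat.find_min hex hk⟩
  have inj : ∀ i j, i < m → j < m → f i = f j → i = j := by
    intro i j hi hj hij
    by_contra hne
    rcases Nat.lt_or_ge i j with h | h
    · exact hmin j hj ⟨i, h, hij⟩
    · exact hmin i hi ⟨j, by omega, hij.symm⟩
  have hadjm : G.Adj (f (m - 1)) (f m) := by
    have e : m - 1 + 1 = m := by omega
    have := hadjf (m - 1); rwa [e] at this
  have hi0 : i0 = 0 := by
    by_contra h0
    have hi0pos : 0 < i0 := Nat.pos_of_ne_zero h0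
    have e1 : i0 - 1 + 1 = i0 := by omega
    have e2 : i0 - 1 + 2 = i0 + 1 := by omega
    have hne : f (i0 - 1) ≠ f (i0 + 1) := by
      have := (inv (i0 - 1)).2.2.2; rw [e2] at this; exact this.symm
    have hadjprev : G.Adj (f i0) (f (i0 - 1)) := by
      have := hadjf (i0 - 1); rw [e1] at this; exact this.symm
    have hpair := nbr_pair G hdeg (hfC i0) (hfC (i0 - 1)) (hfC (i0 + 1)) hne
      hadjprev (hadjf i0)
    have hmem : f (m - 1) ∈ {y | y ∈ C ∧ G.Adj (f i0) y} := by
      refine ⟨hfC _, ?_⟩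
      rw [hi0eq]; exact hadjm.symm
    rw [hpair] at hmem
    rcases hmem with h | h
    · have h2 := inj (m - 1) (i0 - 1) (by omega) (by omega) h
      omega
    · rcases Nat.lt_or_ge (i0 + 1) m with hlt | hge
      · have h2 := inj (m - 1) (i0 + 1) (by omega) hlt h
        have hm2 : m = i0 + 2 := by omega
        rw [hm2] at hi0eq
        exact (inv i0).2.2.2 hi0eq.symm
      · have hi1m : i0 + 1 = m := by omega
        rw [hi1m] at h
        exact (G.ne_of_adj hadjm) h
  rw [hi0] at hi0eq
  have hmv0 : f m = v0 := by rw [← hi0eq, hf0]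
  have hm3 : 3 ≤ m := by
    have h1 : m ≠ 0 := by omega
    have h2 : m ≠ 1 := by
      intro h; rw [h, ← hf0] at hmv0; exact (G.ne_of_adj (hadjf 0)) hmv0.symm
    have h3 : m ≠ 2 := by
      intro h; rw [h, ← hf0] at hmv0; exact (inv 0).2.2.2 hmv0
    omega
  -- surjectivity
  set S : Set V := f '' (Set.Iio m) with hS_def
  have hSC : S ⊆ C := by rintro x ⟨k, _, rfl⟩; exact hfC k
  have hadj0m : G.Adj (f 0) (f (m - 1)) := by
    have := hadjm; rw [hmv0, ← hf0] at this; exact this.symm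
  have hne1m : f 1 ≠ f (m - 1) := by
    intro h; have := inj 1 (m - 1) (by omega) (by omega) h; omega
  have hclosed : ∀ x ∈ S, ∀ y ∈ C, G.Adj x y → y ∈ S := by
    rintro x ⟨k, hk, rfl⟩ y hyC hadj
    have hk' : k < m := Set.mem_Iio.mp hk
    rcases Nat.eq_zero_or_pos k with rfl | hkpos
    · have hpair := nbr_pair G hdeg (hfC 0) (hfC 1) (hfC (m - 1)) hne1m (hadjf 0) hadj0m
      have hmem : y ∈ {y | y ∈ C ∧ G.Adj (f 0) y} := ⟨hyC, hadj⟩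
      rw [hpair] at hmem
      rcases hmem with rfl | rfl
      · exact ⟨1, Set.mem_Iio.mpr (by omega), rfl⟩
      · exact ⟨m - 1, Set.mem_Iio.mpr (by omega), rfl⟩
    · have e1 : k - 1 + 1 = k := by omega
      have e2 : k - 1 + 2 = k + 1 := by omega
      have hne : f (k - 1) ≠ f (k + 1) := by
        have := (inv (k - 1)).2.2.2; rw [e2] at this; exact this.symm
      have hadjprev : G.Adj (f k) (f (k - 1)) := by
        have := hadjf (k - 1); rw [e1] at this; exact this.symm
      have hpair := nbr_pair G hdeg (hfC k) (hfC (k - 1)) (hfC (k + 1)) hne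
        hadjprev (hadjf k)
      have hmem : y ∈ {y | y ∈ C ∧ G.Adj (f k) y} := ⟨hyC, hadj⟩
      rw [hpair] at hmem
      rcases hmem with rfl | rfl
      · exact ⟨k - 1, Set.mem_Iio.mpr (by omega), rfl⟩
      · rcases Nat.lt_or_ge (k + 1) m with hlt | hge
        · exact ⟨k + 1, Set.mem_Iio.mpr hlt, rfl⟩
        · have : k + 1 = m := by omega
          rw [this, hmv0, ← hf0]
          exact ⟨0, Set.mem_Iio.mpr (by omega), rfl⟩
  have hCS : C ⊆ S := closed_connected_eq G hCconn hSC ⟨0, Set.mem_Iio.mpr (by omega), hf0⟩ hclosed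
  have hSeqC : S = C := subset_antisymm hSC hCS
  have hScard : S.ncard = m := by
    have hSF : S = ↑((Finset.range m).image f) := by
      ext x
      simp only [hS_def, Set.mem_image, Finset.coe_image, Finset.coe_range]
    rw [hSF, Set.ncard_coe_finset,
      Finset.card_image_of_injOn (fun i hi j hj hij =>
        inj i j (Finset.mem_range.mp hi) (Finset.mem_range.mp hj) hij),
      Finset.card_range]
  have hmn : m = C.ncard := by rw [← hScard, hSeqC]
  -- assemble
  refine ⟨f, hf0, by rw [← hmn]; exact hmv0, hfC, by rw [← hmn]; exact inj, ?_, hadjf, ?_⟩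
  · intro v hv
    obtain ⟨i, hi, hfi⟩ := hCS hv
    exact ⟨i, by have := Set.mem_Iio.mp hi; omega, hfi⟩
  · rw [← hmn]
    intro i j hi hj hadj
    rcases Nat.eq_zero_or_pos i with rfl | hipos
    · have hpair := nbr_pair G hdeg (hfC 0) (hfC 1) (hfC (m - 1)) hne1m (hadjf 0) hadj0m
      have hmem : f j ∈ {y | y ∈ C ∧ G.Adj (f 0) y} := ⟨hfC j, hadj⟩
      rw [hpair] at hmem
      rcases hmem with h | h
      · exact Or.inl (by rw [inj j 1 hj (by omega) h])
      · exact Or.inr (Or.inr (Or.inl ⟨rfl, inj j (m - 1) hj (by omega) h⟩))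
    · have e1 : i - 1 + 1 = i := by omega
      have e2 : i - 1 + 2 = i + 1 := by omega
      have hne : f (i - 1) ≠ f (i + 1) := by
        have := (inv (i - 1)).2.2.2; rw [e2] at this; exact this.symm
      have hadjprev : G.Adj (f i) (f (i - 1)) := by
        have := hadjf (i - 1); rw [e1] at this; exact this.symm
      have hpair := nbr_pair G hdeg (hfC i) (hfC (i - 1)) (hfC (i + 1)) hne
        hadjprev (hadjf i)
      have hmem : f j ∈ {y | y ∈ C ∧ G.Adj (f i) y} := ⟨hfC j, hadj⟩
      rw [hpair] at hmem
      rcases hmem with h | h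
      · have := inj j (i - 1) hj (by omega) h
        exact Or.inr (Or.inl (by omega))
      · rcases Nat.lt_or_ge (i + 1) m with hlt | hge
        · exact Or.inl (inj j (i + 1) hj hlt h)
        · have him : i = m - 1 := by omega
          have : f (i + 1) = f 0 := by rw [show i + 1 = m by omega, hmv0, hf0]
          rw [this] at h
          exact Or.inr (Or.inr (Or.inr ⟨inj j 0 hj (by omega) h, him⟩))

lemma exists_adj_of_connected_union {V : Type} (G : SimpleGraph V) {S T : Set V}
    (h : (G.induce (S ∪ T)).Connected) (hS : S.Nonempty) (hT : T.Nonempty)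
    (hd : ∀ x, x ∈ S → x ∈ T → False) : ∃ s ∈ S, ∃ t ∈ T, G.Adj s t := by
  obtain ⟨s0, hs0⟩ := hS
  obtain ⟨t0, ht0⟩ := hT
  suffices H : ∀ (u v : ↥(S ∪ T)) (_ : (G.induce (S ∪ T)).Walk u v),
      u.val ∈ S → v.val ∈ T → ∃ s ∈ S, ∃ t ∈ T, G.Adj s t by
    obtain ⟨w⟩ := h.preconnected ⟨s0, Or.inl hs0⟩ ⟨t0, Or.inr ht0⟩
    exact H _ _ w hs0 ht0
  intro u v w
  induction w with
  | nil => exact fun hu hv => absurd (hd _ hu hv) (by simp)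
  | @cons u v _ hadj p ih =>
      intro hu hv
      by_cases hvS : v.val ∈ S
      · exact ih hvS hv
      · have hvT : v.val ∈ (S ∪ T) := v.2
        exact ⟨u.val, hu, v.val, hvT.resolve_left hvS, hadj⟩

lemma exists_adj_in_connected {V : Type} (G : SimpleGraph V) {B : Set V}
    (h : (G.induce B).Connected) {x y : V} (hx : x ∈ B) (hy : y ∈ B) (hxy : x ≠ y) :
    ∃ b ∈ B, b ≠ x ∧ G.Adj x b := by
  have hu : ({x} : Set V) ∪ (B \ {x}) = B := by
    rw [Set.singleton_union, Set.insert_diff_singleton, Set.insert_eq_self.mpr hx]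
  have h' : (G.induce (({x} : Set V) ∪ (B \ {x}))).Connected := by rwa [hu]
  obtain ⟨s, hs, t, ht, hadj⟩ := exists_adj_of_connected_union G h' ⟨x, rfl⟩
    ⟨y, hy, hxy.symm⟩ (fun a ha hb => hb.2 ha)
  rw [Set.mem_singleton_iff] at hs
  subst hs
  exact ⟨t, ht.1, fun h => ht.2 (by simp [h]), hadj⟩

lemma boundary_pair {V : Type} [Fintype V] (G : SimpleGraph V) {C : Set V}
    (hCconn : (G.induce C).Connected)
    (hdeg : ∀ x ∈ C, {y | y ∈ C ∧ G.Adj x y}.ncard = 2)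
    {S : Set V} (hSC : S ⊆ C) (hSne : S.Nonempty) (hconn : (G.induce S).Connected)
    (hproper : S ≠ C) :
    ∃ p q : V, ∀ v ∈ C, v ∉ S → (∃ s ∈ S, G.Adj v s) → v = p ∨ v = q := by
  classical
  obtain ⟨v0, hv0C, hv0S⟩ : ∃ v0, v0 ∈ C ∧ v0 ∉ S := by
    by_contra h
    push_neg at h
    exact hproper (subset_antisymm hSC h)
  obtain ⟨f, hf0, hfn, hfC, hinj, hsurj, hadjf, hchar⟩ := cycle_label G hCconn hdeg hv0C
  set n := C.ncard with hn_def
  set T : Finset ℕ := (Finset.range n).filter (fun i => f i ∈ S) with hT_def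
  have hTmem : ∀ i, i ∈ T ↔ i < n ∧ f i ∈ S := by
    intro i; simp [hT_def]
  have hTne : T.Nonempty := by
    obtain ⟨s, hs⟩ := hSne
    obtain ⟨i, hi, hfi⟩ := hsurj s (hSC hs)
    exact ⟨i, (hTmem i).mpr ⟨hi, hfi ▸ hs⟩⟩
  set a := T.min' hTne with ha_def
  set b := T.max' hTne with hb_def
  have haT : a ∈ T := T.min'_mem hTne
  have hbT : b ∈ T := T.max'_mem hTne
  have ha1 : 1 ≤ a := by
    rcases Nat.eq_zero_or_pos a with h | h
    · exfalso
      have := ((hTmem a).mp haT).2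
      rw [h, hf0] at this
      exact hv0S this
    · exact h
  have hbn : b < n := ((hTmem b).mp hbT).1
  have hinterval : ∀ c, a ≤ c → c ≤ b → c ∈ T := by
    intro c hac hcb
    by_contra hc
    -- split S into two parts
    have hcn : c < n := by omega
    have hfcS : f c ∉ S := fun h => hc ((hTmem c).mpr ⟨hcn, h⟩)
    have hca : c ≠ a := fun h => hc (h ▸ haT)
    have hcb' : c ≠ b := fun h => hc (h ▸ hbT)
    set S1 : Set V := {x | x ∈ S ∧ ∃ i, i < c ∧ f i = x} with hS1_def
    set S2 : Set V := {x | x ∈ S ∧ ¬∃ i, i < c ∧ f i = x} with hS2_def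
    have hU : S1 ∪ S2 = S := by
      ext x
      constructor
      · rintro (hx | hx) <;> exact hx.1
      · intro hx
        by_cases h : ∃ i, i < c ∧ f i = x
        · exact Or.inl ⟨hx, h⟩
        · exact Or.inr ⟨hx, h⟩
    have hd : ∀ x, x ∈ S1 → x ∈ S2 → False := fun x h1 h2 => h2.2 h1.2
    have h1ne : S1.Nonempty := ⟨f a, ((hTmem a).mp haT).2, a, by omega, rfl⟩
    have h2ne : S2.Nonempty := by
      refine ⟨f b, ((hTmem b).mp hbT).2, ?_⟩
      rintro ⟨i, hic, hfi⟩
      have := hinj i b (by omega) hbn hfi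
      omega
    have hconn' : (G.induce (S1 ∪ S2)).Connected := by rwa [hU]
    obtain ⟨s1, hs1, s2, hs2, hadj⟩ := exists_adj_of_connected_union G hconn' h1ne h2ne hd
    obtain ⟨i, hic, rfl⟩ := hs1.2
    -- index of s2
    obtain ⟨j, hjn, hfj⟩ := hsurj s2 (hSC hs2.1)
    have hjT : j ∈ T := (hTmem j).mpr ⟨hjn, hfj ▸ hs2.1⟩
    have hjc : ¬ j < c := fun h => hs2.2 ⟨j, h, hfj⟩
    have hja : a ≤ j := T.min'_le j hjT
    have hjb : j ≤ b := T.le_max' j hjT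
    have hiT : i ∈ T := (hTmem i).mpr ⟨by omega, hs1.1⟩
    have hia : a ≤ i := T.min'_le i hiT
    have hjc' : j ≠ c := fun h => hc (h ▸ hjT)
    rw [← hfj] at hadj
    have := hchar i j (by omega) hjn hadj
    omega
  refine ⟨f (a - 1), f ((b + 1) % n), ?_⟩
  intro v hvC hvS ⟨s, hsS, hadj⟩
  obtain ⟨k, hkn, rfl⟩ := hsurj v hvC
  obtain ⟨i, hin, rfl⟩ := hsurj s (hSC hsS)
  have hiT : i ∈ T := (hTmem i).mpr ⟨hin, hsS⟩
  have hia : a ≤ i := T.min'_le i hiT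
  have hib : i ≤ b := T.le_max' i hiT
  have hkT : k ∉ T := fun h => hvS ((hTmem k).mp h).2
  have := hchar k i hkn hin hadj
  rcases this with h | h | h | h
  · left
    have hka : k = a - 1 := by
      by_contra hne
      exact hkT (hinterval k (by omega) (by omega))
    rw [hka]
  · right
    have hib' : i = b := by
      by_contra hne
      exact hkT (hinterval k (by omega) (by omega))
    have hlt : b + 1 < n := by omega
    rw [Nat.mod_eq_of_lt hlt, show k = b + 1 by omega]
  · right
    have hbn' : b + 1 = n := by omega
    rw [hbn', Nat.mod_self, h.1]
  · omega

lemma three_distinct_ncard {V : Type} [Fintype V] {s : Set V} {a b c : V}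
    (ha : a ∈ s) (hb : b ∈ s) (hc : c ∈ s) (hab : a ≠ b) (hac : a ≠ c) (hbc : b ≠ c) :
    3 ≤ s.ncard := by
  have hsub : ({a, b, c} : Set V) ⊆ s := by
    rintro x (rfl | rfl | rfl) <;> assumption
  have : ({a, b, c} : Set V).ncard = 3 := by
    rw [Set.ncard_insert_of_notMem (by simp [hab, hac]) (Set.toFinite _),
      Set.ncard_pair hbc]
  rw [← this]
  exact Set.ncard_le_ncard hsub (Set.toFinite _)

lemma pigeon {V : Type} [Fintype V] (G : SimpleGraph V) {C : Set V}
    (hCconn : (G.induce C).Connected)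
    (hdeg : ∀ x ∈ C, {y | y ∈ C ∧ G.Adj x y}.ncard = 2)
    {B B1 B2 B3 : Set V}
    (hB : B ⊆ C) (hBne : B.Nonempty) (hBconn : (G.induce B).Connected)
    (h1 : B1 ⊆ C) (h2 : B2 ⊆ C) (h3 : B3 ⊆ C)
    (hd1 : Disjoint B1 B) (hd2 : Disjoint B2 B) (hd3 : Disjoint B3 B)
    (hd12 : Disjoint B1 B2) (hd13 : Disjoint B1 B3) (hd23 : Disjoint B2 B3)
    (ha1 : ∃ y ∈ B1, ∃ x ∈ B, G.Adj y x)
    (ha2 : ∃ y ∈ B2, ∃ x ∈ B, G.Adj y x)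
    (ha3 : ∃ y ∈ B3, ∃ x ∈ B, G.Adj y x) : False := by
  obtain ⟨y1, hy1, x1, hx1, hadj1⟩ := ha1
  obtain ⟨y2, hy2, x2, hx2, hadj2⟩ := ha2
  obtain ⟨y3, hy3, x3, hx3, hadj3⟩ := ha3
  have hBC : B ≠ C := by
    intro h
    rw [h] at hd1
    exact (Set.disjoint_left.mp hd1 hy1) (h1 hy1)
  obtain ⟨p, q, hpq⟩ := boundary_pair G hCconn hdeg hB hBne hBconn hBC
  have hv1 := hpq y1 (h1 hy1) (Set.disjoint_left.mp hd1 hy1) ⟨x1, hx1, hadj1⟩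
  have hv2 := hpq y2 (h2 hy2) (Set.disjoint_left.mp hd2 hy2) ⟨x2, hx2, hadj2⟩
  have hv3 := hpq y3 (h3 hy3) (Set.disjoint_left.mp hd3 hy3) ⟨x3, hx3, hadj3⟩
  have h12 : y1 ≠ y2 := fun h => (Set.disjoint_left.mp hd12 hy1) (h ▸ hy2)
  have h13 : y1 ≠ y3 := fun h => (Set.disjoint_left.mp hd13 hy1) (h ▸ hy3)
  have h23 : y2 ≠ y3 := fun h => (Set.disjoint_left.mp hd23 hy2) (h ▸ hy3)
  rcases hv1 with rfl | rfl <;> rcases hv2 with rfl | rfl <;> rcases hv3 with rfl | rfl <;>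
    simp_all
lemma induce_conn_singleton {V : Type} (G : SimpleGraph V) (v : V) :
    (G.induce {v}).Connected := by
  have : Nonempty ({v} : Set V) := ⟨⟨v, rfl⟩⟩
  constructor
  intro a b
  have : a = b := Subtype.ext (by rw [a.2, b.2])
  rw [this]

lemma induce_conn_insert {V : Type} (G : SimpleGraph V) {B : Set V}
    (hB : (G.induce B).Connected) {x b : V} (hb : b ∈ B) (hadj : G.Adj x b) :
    (G.induce (insert x B)).Connected := by
  have h := SimpleGraph.connected_induce_union (G := G) (s := {x}) (t := B)
    (induce_conn_singleton G x).preconnected hB.preconnected rfl hb hadj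
  rwa [Set.singleton_union] at h

lemma path_image_connected {V : Type} (G : SimpleGraph V) (f : ℕ → V)
    (hadj : ∀ i, G.Adj (f i) (f (i + 1))) (a : ℕ) :
    ∀ b, a ≤ b → (G.induce (f '' Set.Icc a b)).Connected := by
  intro b
  induction b with
  | zero =>
      intro hab
      have : a = 0 := Nat.le_zero.mp hab
      subst this
      have : f '' Set.Icc 0 0 = {f 0} := by simp
      rw [this]; exact induce_conn_singleton G (f 0)
  | succ b ih =>
      intro hab
      rcases Nat.lt_or_ge b.succ a.succ with h | h
      · have : a = b + 1 := by omega
        subst this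
        have : f '' Set.Icc (b+1) (b+1) = {f (b+1)} := by simp
        rw [this]; exact induce_conn_singleton G (f (b+1))
      · have hab' : a ≤ b := by omega
        have himg : f '' Set.Icc a (b+1) = insert (f (b+1)) (f '' Set.Icc a b) := by
          rw [show Set.Icc a (b+1) = insert (b+1) (Set.Icc a b) by
            ext i; simp [Set.mem_Icc]; omega]
          rw [Set.image_insert_eq]
        rw [himg]
        exact induce_conn_insert G (ih hab') ⟨b, ⟨hab', le_refl b⟩, rfl⟩ (hadj b).symm

lemma fh_adj (a b : Fin 5) : fullHouse.Adj a b ↔ (a ≠ b ∧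
    ((((a : ℕ) < 4 ∧ (b : ℕ) < 4) ∨ (a = 4 ∧ (b = 0 ∨ b = 1))) ∨
     (((b : ℕ) < 4 ∧ (a : ℕ) < 4) ∨ (b = 4 ∧ (a = 0 ∨ a = 1))))) := by
  rw [fullHouse, SimpleGraph.fromRel_adj]


lemma suffII {V : Type} [Fintype V] (G : SimpleGraph V) (C I : Set V)
    (hdisj : Disjoint C I)
    (hCconn : (G.induce C).Connected)
    (hdeg : ∀ x ∈ C, {y | y ∈ C ∧ G.Adj x y}.ncard = 2)
    {z1 z2 : V} (hz1 : z1 ∈ I) (hz2 : z2 ∈ I) (hz12 : z1 ≠ z2)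
    (hzadj : ∀ z ∈ I, ∀ w ∈ C, G.Adj z w)
    (hn5 : 5 ≤ C.ncard) :
    ∃ X : Fin 5 → Set V, IsIMModel G fullHouse X := by
  classical
  set n := C.ncard with hn_def
  have hCne : C.Nonempty := Set.nonempty_of_ncard_ne_zero (by omega)
  obtain ⟨v0, hv0⟩ := hCne
  obtain ⟨f, hf0, hfn, hfC, hinj, hsurj, hadjf, hchar⟩ := cycle_label G hCconn hdeg hv0
  have hz1C : z1 ∉ C := Set.disjoint_right.mp hdisj hz1
  have hz2C : z2 ∉ C := Set.disjoint_right.mp hdisj hz2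
  set A : Set V := f '' Set.Icc 4 (n - 1) with hA_def
  have hAC : ∀ y ∈ A, y ∈ C := by rintro y ⟨j, _, rfl⟩; exact hfC j
  have hAmem : ∀ y, y ∈ A → ∃ j, 4 ≤ j ∧ j ≤ n - 1 ∧ f j = y := by
    rintro y ⟨j, ⟨h1, h2⟩, rfl⟩; exact ⟨j, h1, h2, rfl⟩
  have hfA : ∀ i, i < 4 → f i ∉ A := by
    intro i hi hmem
    obtain ⟨j, hj1, hj2, hj⟩ := hAmem _ hmem
    have := hinj j i (by omega) (by omega) hj
    omega
  have hz1A : z1 ∉ A := fun h => hz1C (hAC _ h)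
  have hz2A : z2 ∉ A := fun h => hz2C (hAC _ h)
  have hfne : ∀ i j, i < n → j < n → i ≠ j → f i ≠ f j := by
    intro i j hi hj hne heq; exact hne (hinj i j hi hj heq)
  have hzf : ∀ i, z1 ≠ f i ∧ z2 ≠ f i := by
    intro i
    exact ⟨fun h => hz1C (h ▸ hfC i), fun h => hz2C (h ▸ hfC i)⟩
  refine ⟨![{z1, f 1}, insert z2 A, {f 2}, {f 3}, {f 0}], ?_, ?_, ?_, ?_⟩
  · -- nonempty
    intro u
    fin_cases u
    · exact ⟨z1, Or.inl rfl⟩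
    · exact ⟨z2, Set.mem_insert _ _⟩
    · exact ⟨f 2, rfl⟩
    · exact ⟨f 3, rfl⟩
    · exact ⟨f 0, rfl⟩
  · -- disjoint
    have d01 : Disjoint ({z1, f 1} : Set V) (insert z2 A) := by
      rw [Set.disjoint_left]
      rintro a (rfl | rfl)
      · rintro (rfl | h)
        · exact hz12 rfl
        · exact hz1A h
      · rintro (h | h)
        · exact (hzf 1).2 h.symm
        · exact hfA 1 (by omega) h
    have d02 : Disjoint ({z1, f 1} : Set V) {f 2} := by
      rw [Set.disjoint_left]
      rintro a (rfl | rfl) h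
      · exact (hzf 2).1 h
      · exact hfne 1 2 (by omega) (by omega) (by omega) h
    have d03 : Disjoint ({z1, f 1} : Set V) {f 3} := by
      rw [Set.disjoint_left]
      rintro a (rfl | rfl) h
      · exact (hzf 3).1 h
      · exact hfne 1 3 (by omega) (by omega) (by omega) h
    have d04 : Disjoint ({z1, f 1} : Set V) {f 0} := by
      rw [Set.disjoint_left]
      rintro a (rfl | rfl) h
      · exact (hzf 0).1 h
      · exact hfne 1 0 (by omega) (by omega) (by omega) h
    have d12 : Disjoint (insert z2 A) ({f 2} : Set V) := by
      rw [Set.disjoint_left]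
      rintro a (rfl | h) h2
      · exact (hzf 2).2 h2
      · rw [Set.mem_singleton_iff] at h2; exact hfA 2 (by omega) (h2 ▸ h)
    have d13 : Disjoint (insert z2 A) ({f 3} : Set V) := by
      rw [Set.disjoint_left]
      rintro a (rfl | h) h2
      · exact (hzf 3).2 h2
      · rw [Set.mem_singleton_iff] at h2; exact hfA 3 (by omega) (h2 ▸ h)
    have d14 : Disjoint (insert z2 A) ({f 0} : Set V) := by
      rw [Set.disjoint_left]
      rintro a (rfl | h) h2
      · exact (hzf 0).2 h2
      · rw [Set.mem_singleton_iff] at h2; exact hfA 0 (by omega) (h2 ▸ h)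
    have d23 : Disjoint ({f 2} : Set V) {f 3} := by
      rw [Set.disjoint_left]
      rintro a rfl h
      exact hfne 2 3 (by omega) (by omega) (by omega) h
    have d24 : Disjoint ({f 2} : Set V) {f 0} := by
      rw [Set.disjoint_left]
      rintro a rfl h
      exact hfne 2 0 (by omega) (by omega) (by omega) h
    have d34 : Disjoint ({f 3} : Set V) {f 0} := by
      rw [Set.disjoint_left]
      rintro a rfl h
      exact hfne 3 0 (by omega) (by omega) (by omega) h
    intro u v huv
    fin_cases u <;> fin_cases v <;>
      first
        | exact absurd rfl huv
        | exact d01 | exact d02 | exact d03 | exact d04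
        | exact d12 | exact d13 | exact d14
        | exact d23 | exact d24 | exact d34
        | exact d01.symm | exact d02.symm | exact d03.symm | exact d04.symm
        | exact d12.symm | exact d13.symm | exact d14.symm
        | exact d23.symm | exact d24.symm | exact d34.symm
  · -- connected
    intro u
    fin_cases u
    · show (G.induce {z1, f 1}).Connected
      have : ({z1, f 1} : Set V) = insert z1 {f 1} := rfl
      rw [this]
      exact induce_conn_insert G (induce_conn_singleton G (f 1)) rfl
        (hzadj z1 hz1 (f 1) (hfC 1))
    · show (G.induce (insert z2 A)).Connected
      have hconnA : (G.induce A).Connected :=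
        path_image_connected G f hadjf 4 (n - 1) (by omega)
      exact induce_conn_insert G hconnA ⟨4, ⟨le_refl 4, by omega⟩, rfl⟩
        (hzadj z2 hz2 (f 4) (hfC 4))
    · exact induce_conn_singleton G (f 2)
    · exact induce_conn_singleton G (f 3)
    · exact induce_conn_singleton G (f 0)
  · -- adjacency iff
    have hadj01 : ∃ x ∈ ({z1, f 1} : Set V), ∃ y ∈ insert z2 A, G.Adj x y :=
      ⟨f 1, Or.inr rfl, z2, Set.mem_insert _ _, (hzadj z2 hz2 (f 1) (hfC 1)).symm⟩
    have hadj02 : ∃ x ∈ ({z1, f 1} : Set V), ∃ y ∈ ({f 2} : Set V), G.Adj x y :=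
      ⟨f 1, Or.inr rfl, f 2, rfl, hadjf 1⟩
    have hadj03 : ∃ x ∈ ({z1, f 1} : Set V), ∃ y ∈ ({f 3} : Set V), G.Adj x y :=
      ⟨z1, Or.inl rfl, f 3, rfl, hzadj z1 hz1 (f 3) (hfC 3)⟩
    have hadj04 : ∃ x ∈ ({z1, f 1} : Set V), ∃ y ∈ ({f 0} : Set V), G.Adj x y :=
      ⟨f 1, Or.inr rfl, f 0, rfl, (hadjf 0).symm⟩
    have hadj12 : ∃ x ∈ insert z2 A, ∃ y ∈ ({f 2} : Set V), G.Adj x y :=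
      ⟨z2, Set.mem_insert _ _, f 2, rfl, hzadj z2 hz2 (f 2) (hfC 2)⟩
    have hadj13 : ∃ x ∈ insert z2 A, ∃ y ∈ ({f 3} : Set V), G.Adj x y :=
      ⟨z2, Set.mem_insert _ _, f 3, rfl, hzadj z2 hz2 (f 3) (hfC 3)⟩
    have hadj14 : ∃ x ∈ insert z2 A, ∃ y ∈ ({f 0} : Set V), G.Adj x y := by
      refine ⟨f (n - 1), Or.inr ⟨n - 1, ⟨by omega, le_refl _⟩, rfl⟩, f 0, rfl, ?_⟩
      have := hadjf (n - 1)
      rw [show n - 1 + 1 = n by omega, hfn, ← hf0] at this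
      exact this
    have hadj23 : ∃ x ∈ ({f 2} : Set V), ∃ y ∈ ({f 3} : Set V), G.Adj x y :=
      ⟨f 2, rfl, f 3, rfl, hadjf 2⟩
    have hnadj24 : ¬ ∃ x ∈ ({f 2} : Set V), ∃ y ∈ ({f 0} : Set V), G.Adj x y := by
      rintro ⟨x, rfl, y, rfl, hadj⟩
      have := hchar 2 0 (by omega) (by omega) hadj
      omega
    have hnadj34 : ¬ ∃ x ∈ ({f 3} : Set V), ∃ y ∈ ({f 0} : Set V), G.Adj x y := by
      rintro ⟨x, rfl, y, rfl, hadj⟩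
      have := hchar 3 0 (by omega) (by omega) hadj
      omega
    have hsymm : ∀ (P Q : Set V), (∃ x ∈ P, ∃ y ∈ Q, G.Adj x y) →
        (∃ x ∈ Q, ∃ y ∈ P, G.Adj x y) := by
      rintro P Q ⟨x, hx, y, hy, h⟩; exact ⟨y, hy, x, hx, h.symm⟩
    have hsymm' : ∀ (P Q : Set V), ¬(∃ x ∈ P, ∃ y ∈ Q, G.Adj x y) →
        ¬(∃ x ∈ Q, ∃ y ∈ P, G.Adj x y) := fun P Q h h2 => h (hsymm _ _ h2)
    intro u v huv
    fin_cases u <;> fin_cases v <;>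
      first
        | exact absurd rfl huv
        | (exact iff_of_true (by first
            | exact hadj01 | exact hadj02 | exact hadj03 | exact hadj04
            | exact hadj12 | exact hadj13 | exact hadj14 | exact hadj23
            | exact hsymm _ _ hadj01 | exact hsymm _ _ hadj02
            | exact hsymm _ _ hadj03 | exact hsymm _ _ hadj04
            | exact hsymm _ _ hadj12 | exact hsymm _ _ hadj13
            | exact hsymm _ _ hadj14 | exact hsymm _ _ hadj23) (by rw [fh_adj]; decide))
        | (exact iff_of_false (by first
            | exact hnadj24 | exact hnadj34
            | exact hsymm' _ _ hnadj24 | exact hsymm' _ _ hnadj34) (by rw [fh_adj]; decide))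

lemma suffI {V : Type} [Fintype V] (G : SimpleGraph V) (C I N : Set V)
    (hdisj : Disjoint C I)
    (hCconn : (G.induce C).Connected)
    (hdeg : ∀ x ∈ C, {y | y ∈ C ∧ G.Adj x y}.ncard = 2)
    {z1 z2 w : V} (hz1 : z1 ∈ I) (hz2 : z2 ∈ I) (hz12 : z1 ≠ z2)
    (hNC : N ⊆ C) (hN3 : 3 ≤ N.ncard)
    (hz1N : ∀ y, G.Adj z1 y ↔ y ∈ N) (hz2N : ∀ y, G.Adj z2 y ↔ y ∈ N)
    (hw : w ∈ C) (hwN : w ∉ N) :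
    ∃ X : Fin 5 → Set V, IsIMModel G fullHouse X := by
  classical
  set n := C.ncard with hn_def
  obtain ⟨f, hf0, hfn, hfC, hinj, hsurj, hadjf, hchar⟩ := cycle_label G hCconn hdeg hw
  have hz1C : z1 ∉ C := Set.disjoint_right.mp hdisj hz1
  have hz2C : z2 ∉ C := Set.disjoint_right.mp hdisj hz2
  -- index set of N
  set T : Finset ℕ := (Finset.range n).filter (fun i => f i ∈ N) with hT_def
  have hTmem : ∀ i, i ∈ T ↔ i < n ∧ f i ∈ N := by intro i; simp [hT_def]
  have hT0 : ∀ i ∈ T, 1 ≤ i := by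
    intro i hi
    rcases Nat.eq_zero_or_pos i with rfl | h
    · exact absurd (hf0 ▸ ((hTmem 0).mp hi).2) hwN
    · exact h
  have hTcard : 3 ≤ T.card := by
    obtain ⟨N', hN'sub, hN'card⟩ := Set.exists_subset_card_eq hN3
    obtain ⟨a, b, c, hab, hac, hbc, rfl⟩ := Set.ncard_eq_three.mp hN'card
    obtain ⟨ia, hia, hfa⟩ := hsurj a (hNC (hN'sub (by simp)))
    obtain ⟨ib, hib, hfb⟩ := hsurj b (hNC (hN'sub (by simp)))
    obtain ⟨ic, hic, hfc⟩ := hsurj c (hNC (hN'sub (by simp)))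
    have hsub : ({ia, ib, ic} : Finset ℕ) ⊆ T := by
      intro i hi
      simp only [Finset.mem_insert, Finset.mem_singleton] at hi
      rcases hi with rfl | rfl | rfl <;> rw [hTmem]
      · exact ⟨hia, hfa ▸ hN'sub (by simp)⟩
      · exact ⟨hib, hfb ▸ hN'sub (by simp)⟩
      · exact ⟨hic, hfc ▸ hN'sub (by simp)⟩
    have hcard3 : ({ia, ib, ic} : Finset ℕ).card = 3 := by
      rw [Finset.card_insert_of_notMem, Finset.card_insert_of_notMem,
        Finset.card_singleton]
      · simp only [Finset.mem_singleton]
        intro h; exact hbc (by rw [← hfb, ← hfc, h])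
      · simp only [Finset.mem_insert, Finset.mem_singleton]
        rintro (h | h)
        · exact hab (by rw [← hfa, ← hfb, h])
        · exact hac (by rw [← hfa, ← hfc, h])
    calc 3 = ({ia, ib, ic} : Finset ℕ).card := hcard3.symm
      _ ≤ T.card := Finset.card_le_card hsub
  have hTne : T.Nonempty := Finset.card_pos.mp (by omega)
  set p := T.min' hTne with hp_def
  set q := T.max' hTne with hq_def
  have hpT : p ∈ T := T.min'_mem hTne
  have hqT : q ∈ T := T.max'_mem hTne
  obtain ⟨r, hrT, hrp, hrq⟩ : ∃ r ∈ T, r ≠ p ∧ r ≠ q := by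
    have : ((T.erase p).erase q).Nonempty := by
      rw [← Finset.card_pos]
      have h1 := Finset.card_erase_of_mem hpT
      have h2 : T.card - 1 - 1 ≤ ((T.erase p).erase q).card := by
        rcases Finset.decidableMem q (T.erase p) with h | h
        · rw [Finset.erase_eq_of_notMem h]; omega
        · rw [Finset.card_erase_of_mem h]; omega
      omega
    obtain ⟨r, hr⟩ := this
    rw [Finset.mem_erase, Finset.mem_erase] at hr
    exact ⟨r, hr.2.2, hr.2.1, hr.1⟩
  have hpr : p < r := lt_of_le_of_ne (T.min'_le r hrT) (Ne.symm hrp)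
  have hrq' : r < q := lt_of_le_of_ne (T.le_max' r hrT) hrq
  have hp1 : 1 ≤ p := hT0 p hpT
  have hqn : q < n := ((hTmem q).mp hqT).1
  have hpN : f p ∈ N := ((hTmem p).mp hpT).2
  have hrN : f r ∈ N := ((hTmem r).mp hrT).2
  have hqN : f q ∈ N := ((hTmem q).mp hqT).2
  have hfnw : f n = w := hfn
  have hNout : ∀ j, q < j → j ≤ n → f j ∉ N := by
    intro j h1 h2 hmem
    rcases Nat.lt_or_ge j n with h | h
    · have : j ∈ T := (hTmem j).mpr ⟨h, hmem⟩
      have := T.le_max' j this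
      omega
    · have : j = n := by omega
      rw [this, hfnw] at hmem
      exact hwN hmem
  have hr2 : 2 ≤ r := by omega
  -- value distinctness helper
  have hval : ∀ i j, i < n → j ≤ n → i ≠ j → i ≠ 0 → f i ≠ f j := by
    intro i j hi hj hij hi0 heq
    rcases Nat.lt_or_ge j n with h | h
    · exact hij (hinj i j hi h heq)
    · have hjn : j = n := by omega
      rw [hjn, hfnw, ← hf0] at heq
      exact hi0 (hinj i 0 hi (by omega) heq)
  have hzf : ∀ i, z1 ≠ f i ∧ z2 ≠ f i := fun i =>
    ⟨fun h => hz1C (h ▸ hfC i), fun h => hz2C (h ▸ hfC i)⟩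
  set A0 : Set V := f '' Set.Icc 1 (r - 1) with hA0_def
  set A1 : Set V := f '' Set.Icc (r + 1) q with hA1_def
  set A4 : Set V := f '' Set.Icc (q + 1) n with hA4_def
  refine ⟨![insert z2 A0, A1, {f r}, {z1}, A4], ?_, ?_, ?_, ?_⟩
  · intro u
    fin_cases u
    · exact ⟨z2, Set.mem_insert _ _⟩
    · exact ⟨f q, ⟨q, ⟨by omega, le_refl q⟩, rfl⟩⟩
    · exact ⟨f r, rfl⟩
    · exact ⟨z1, rfl⟩
    · exact ⟨f n, ⟨n, ⟨by omega, le_refl n⟩, rfl⟩⟩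
  · -- disjointness
    have d01 : Disjoint (insert z2 A0) A1 := by
      rw [Set.disjoint_left]
      rintro a (rfl | ⟨i, ⟨hi1, hi2⟩, rfl⟩) ⟨j, ⟨hj1, hj2⟩, hj⟩
      · exact (hzf j).2 hj.symm
      · exact hval i j (by omega) (by omega) (by omega) (by omega) hj.symm
    have d02 : Disjoint (insert z2 A0) ({f r} : Set V) := by
      rw [Set.disjoint_left]
      rintro a (rfl | ⟨i, ⟨hi1, hi2⟩, rfl⟩) h
      · exact (hzf r).2 h
      · exact hval i r (by omega) (by omega) (by omega) (by omega) h
    have d03 : Disjoint (insert z2 A0) ({z1} : Set V) := by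
      rw [Set.disjoint_left]
      rintro a (rfl | ⟨i, ⟨hi1, hi2⟩, rfl⟩) h
      · exact hz12 h.symm
      · exact (hzf i).1 h.symm
    have d04 : Disjoint (insert z2 A0) A4 := by
      rw [Set.disjoint_left]
      rintro a (rfl | ⟨i, ⟨hi1, hi2⟩, rfl⟩) ⟨j, ⟨hj1, hj2⟩, hj⟩
      · exact (hzf j).2 hj.symm
      · exact hval i j (by omega) (by omega) (by omega) (by omega) hj.symm
    have d12 : Disjoint A1 ({f r} : Set V) := by
      rw [Set.disjoint_left]
      rintro a ⟨i, ⟨hi1, hi2⟩, rfl⟩ h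
      exact hval i r (by omega) (by omega) (by omega) (by omega) h
    have d13 : Disjoint A1 ({z1} : Set V) := by
      rw [Set.disjoint_left]
      rintro a ⟨i, ⟨hi1, hi2⟩, rfl⟩ h
      exact (hzf i).1 h.symm
    have d14 : Disjoint A1 A4 := by
      rw [Set.disjoint_left]
      rintro a ⟨i, ⟨hi1, hi2⟩, rfl⟩ ⟨j, ⟨hj1, hj2⟩, hj⟩
      exact hval i j (by omega) (by omega) (by omega) (by omega) hj.symm
    have d23 : Disjoint ({f r} : Set V) ({z1} : Set V) := by
      rw [Set.disjoint_left]
      rintro a rfl h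
      exact (hzf r).1 h.symm
    have d24 : Disjoint ({f r} : Set V) A4 := by
      rw [Set.disjoint_left]
      rintro a rfl ⟨j, ⟨hj1, hj2⟩, hj⟩
      exact hval r j (by omega) (by omega) (by omega) (by omega) hj.symm
    have d34 : Disjoint ({z1} : Set V) A4 := by
      rw [Set.disjoint_left]
      rintro a rfl ⟨j, ⟨hj1, hj2⟩, hj⟩
      exact (hzf j).1 hj.symm
    intro u v huv
    fin_cases u <;> fin_cases v <;>
      first
        | exact absurd rfl huv
        | exact d01 | exact d02 | exact d03 | exact d04
        | exact d12 | exact d13 | exact d14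
        | exact d23 | exact d24 | exact d34
        | exact d01.symm | exact d02.symm | exact d03.symm | exact d04.symm
        | exact d12.symm | exact d13.symm | exact d14.symm
        | exact d23.symm | exact d24.symm | exact d34.symm
  · -- connected
    intro u
    fin_cases u
    · show (G.induce (insert z2 A0)).Connected
      have hconnA : (G.induce A0).Connected :=
        path_image_connected G f hadjf 1 (r - 1) (by omega)
      exact induce_conn_insert G hconnA ⟨p, ⟨by omega, by omega⟩, rfl⟩
        ((hz2N (f p)).mpr hpN)
    · exact path_image_connected G f hadjf (r + 1) q (by omega)
    · exact induce_conn_singleton G (f r)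
    · exact induce_conn_singleton G z1
    · exact path_image_connected G f hadjf (q + 1) n (by omega)
  · -- adjacency iff
    have hadj01 : ∃ x ∈ insert z2 A0, ∃ y ∈ A1, G.Adj x y :=
      ⟨z2, Set.mem_insert _ _, f q, ⟨q, ⟨by omega, le_refl q⟩, rfl⟩, (hz2N (f q)).mpr hqN⟩
    have hadj02 : ∃ x ∈ insert z2 A0, ∃ y ∈ ({f r} : Set V), G.Adj x y := by
      refine ⟨f (r - 1), Or.inr ⟨r - 1, ⟨by omega, le_refl _⟩, rfl⟩, f r, rfl, ?_⟩
      have := hadjf (r - 1)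
      rwa [show r - 1 + 1 = r by omega] at this
    have hadj03 : ∃ x ∈ insert z2 A0, ∃ y ∈ ({z1} : Set V), G.Adj x y :=
      ⟨f p, Or.inr ⟨p, ⟨by omega, by omega⟩, rfl⟩, z1, rfl, ((hz1N (f p)).mpr hpN).symm⟩
    have hadj04 : ∃ x ∈ insert z2 A0, ∃ y ∈ A4, G.Adj x y := by
      refine ⟨f 1, Or.inr ⟨1, ⟨le_refl 1, by omega⟩, rfl⟩, f n,
        ⟨n, ⟨by omega, le_refl n⟩, rfl⟩, ?_⟩
      have := hadjf 0
      rw [hf0, ← hfnw] at this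
      exact this.symm
    have hadj12 : ∃ x ∈ A1, ∃ y ∈ ({f r} : Set V), G.Adj x y :=
      ⟨f (r + 1), ⟨r + 1, ⟨le_refl _, by omega⟩, rfl⟩, f r, rfl, (hadjf r).symm⟩
    have hadj13 : ∃ x ∈ A1, ∃ y ∈ ({z1} : Set V), G.Adj x y :=
      ⟨f q, ⟨q, ⟨by omega, le_refl q⟩, rfl⟩, z1, rfl, ((hz1N (f q)).mpr hqN).symm⟩
    have hadj14 : ∃ x ∈ A1, ∃ y ∈ A4, G.Adj x y :=
      ⟨f q, ⟨q, ⟨by omega, le_refl q⟩, rfl⟩, f (q + 1),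
        ⟨q + 1, ⟨le_refl _, by omega⟩, rfl⟩, hadjf q⟩
    have hadj23 : ∃ x ∈ ({f r} : Set V), ∃ y ∈ ({z1} : Set V), G.Adj x y :=
      ⟨f r, rfl, z1, rfl, ((hz1N (f r)).mpr hrN).symm⟩
    have hnadj24 : ¬ ∃ x ∈ ({f r} : Set V), ∃ y ∈ A4, G.Adj x y := by
      rintro ⟨x, rfl, y, ⟨j, ⟨hj1, hj2⟩, rfl⟩, hadj⟩
      rcases Nat.lt_or_ge j n with h | h
      · have := hchar r j (by omega) h hadj
        omega
      · have hjn : j = n := by omega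
        rw [hjn, hfnw, ← hf0] at hadj
        have := hchar r 0 (by omega) (by omega) hadj
        omega
    have hnadj34 : ¬ ∃ x ∈ ({z1} : Set V), ∃ y ∈ A4, G.Adj x y := by
      rintro ⟨x, rfl, y, ⟨j, ⟨hj1, hj2⟩, rfl⟩, hadj⟩
      exact hNout j (by omega) (by omega) ((hz1N (f j)).mp hadj)
    have hsymm : ∀ (P Q : Set V), (∃ x ∈ P, ∃ y ∈ Q, G.Adj x y) →
        (∃ x ∈ Q, ∃ y ∈ P, G.Adj x y) := by
      rintro P Q ⟨x, hx, y, hy, h⟩; exact ⟨y, hy, x, hx, h.symm⟩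
    have hsymm' : ∀ (P Q : Set V), ¬(∃ x ∈ P, ∃ y ∈ Q, G.Adj x y) →
        ¬(∃ x ∈ Q, ∃ y ∈ P, G.Adj x y) := fun P Q h h2 => h (hsymm _ _ h2)
    intro u v huv
    fin_cases u <;> fin_cases v <;>
      first
        | exact absurd rfl huv
        | (exact iff_of_true (by first
            | exact hadj01 | exact hadj02 | exact hadj03 | exact hadj04
            | exact hadj12 | exact hadj13 | exact hadj14 | exact hadj23
            | exact hsymm _ _ hadj01 | exact hsymm _ _ hadj02
            | exact hsymm _ _ hadj03 | exact hsymm _ _ hadj04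
            | exact hsymm _ _ hadj12 | exact hsymm _ _ hadj13
            | exact hsymm _ _ hadj14 | exact hsymm _ _ hadj23) (by rw [fh_adj]; decide))
        | (exact iff_of_false (by first
            | exact hnadj24 | exact hnadj34
            | exact hsymm' _ _ hnadj24 | exact hsymm' _ _ hnadj34) (by rw [fh_adj]; decide))

lemma caseB {V : Type} [Fintype V] (G : SimpleGraph V) (C I : Set V)
    (hpart : C ∪ I = Set.univ)
    (hdeg : ∀ x ∈ C, {y | y ∈ C ∧ G.Adj x y}.ncard = 2)
    (hI : ∀ x ∈ I, ∀ y ∈ I, ¬ G.Adj x y)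
    (hzadj : ∀ z ∈ I, ∀ w ∈ C, G.Adj z w)
    (hn4 : C.ncard ≤ 4)
    (X : Fin 5 → Set V) (hm : IsIMModel G fullHouse X) : False := by
  obtain ⟨hne, hdisjX, hconnX, hiff⟩ := hm
  have hmemIC : ∀ v : V, v ∈ C ∨ v ∈ I := by
    intro v
    have : v ∈ C ∪ I := by rw [hpart]; exact Set.mem_univ v
    exact this
  have hno24 : ¬ ∃ x ∈ X 2, ∃ y ∈ X 4, G.Adj x y := by
    rw [hiff 2 4 (by decide), fh_adj]; decide
  have hno34 : ¬ ∃ x ∈ X 3, ∃ y ∈ X 4, G.Adj x y := by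
    rw [hiff 3 4 (by decide), fh_adj]; decide
  by_cases hx4 : ∃ x, x ∈ X 4 ∧ x ∈ C
  · obtain ⟨x, hxX, hxC⟩ := hx4
    have hX2C : X 2 ⊆ C := by
      intro v hv
      rcases hmemIC v with h | h
      · exact h
      · exact absurd ⟨v, hv, x, hxX, hzadj v h x hxC⟩ hno24
    have hX3C : X 3 ⊆ C := by
      intro v hv
      rcases hmemIC v with h | h
      · exact h
      · exact absurd ⟨v, hv, x, hxX, hzadj v h x hxC⟩ hno34
    obtain ⟨y1, y2, hy12, hpair⟩ := Set.ncard_eq_two.mp (hdeg x hxC)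
    have hy1 : y1 ∈ C ∧ G.Adj x y1 := by
      have : y1 ∈ {y | y ∈ C ∧ G.Adj x y} := by rw [hpair]; exact Or.inl rfl
      exact this
    have hy2 : y2 ∈ C ∧ G.Adj x y2 := by
      have : y2 ∈ {y | y ∈ C ∧ G.Adj x y} := by rw [hpair]; exact Or.inr rfl
      exact this
    have hy1X2 : y1 ∉ X 2 := fun h => hno24 ⟨y1, h, x, hxX, hy1.2.symm⟩
    have hy2X2 : y2 ∉ X 2 := fun h => hno24 ⟨y2, h, x, hxX, hy2.2.symm⟩
    have hy1X3 : y1 ∉ X 3 := fun h => hno34 ⟨y1, h, x, hxX, hy1.2.symm⟩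
    have hy2X3 : y2 ∉ X 3 := fun h => hno34 ⟨y2, h, x, hxX, hy2.2.symm⟩
    obtain ⟨c2, hc2⟩ := hne 2
    obtain ⟨c3, hc3⟩ := hne 3
    have hd23 := hdisjX 2 3 (by decide)
    have hd24 := hdisjX 2 4 (by decide)
    have hd34 := hdisjX 3 4 (by decide)
    have hc2c3 : c2 ≠ c3 := fun h => Set.disjoint_left.mp hd23 hc2 (h ▸ hc3)
    have hc2x : c2 ≠ x := fun h => Set.disjoint_left.mp hd24 hc2 (h ▸ hxX)
    have hc3x : c3 ≠ x := fun h => Set.disjoint_left.mp hd34 hc3 (h ▸ hxX)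
    have hc2y1 : c2 ≠ y1 := fun h => hy1X2 (h ▸ hc2)
    have hc2y2 : c2 ≠ y2 := fun h => hy2X2 (h ▸ hc2)
    have hc3y1 : c3 ≠ y1 := fun h => hy1X3 (h ▸ hc3)
    have hc3y2 : c3 ≠ y2 := fun h => hy2X3 (h ▸ hc3)
    have hxy1 : x ≠ y1 := G.ne_of_adj hy1.2
    have hxy2 : x ≠ y2 := G.ne_of_adj hy2.2
    have hsub : ({c2, c3, x, y1, y2} : Set V) ⊆ C := by
      rintro v (rfl | rfl | rfl | rfl | rfl)
      · exact hX2C hc2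
      · exact hX3C hc3
      · exact hxC
      · exact hy1.1
      · exact hy2.1
    have hcard : ({c2, c3, x, y1, y2} : Set V).ncard = 5 := by
      rw [Set.ncard_insert_of_notMem (by simp [hc2c3, hc2x, hc2y1, hc2y2]) (Set.toFinite _),
        Set.ncard_insert_of_notMem (by simp [hc3x, hc3y1, hc3y2]) (Set.toFinite _),
        Set.ncard_insert_of_notMem (by simp [hxy1, hxy2]) (Set.toFinite _),
        Set.ncard_pair hy12]
    have : 5 ≤ C.ncard := hcard ▸ Set.ncard_le_ncard hsub (Set.toFinite _)
    omega
  · push_neg at hx4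
    have hX4I : X 4 ⊆ I := fun v hv => (hmemIC v).resolve_left (hx4 v hv)
    obtain ⟨z, hz⟩ := hne 4
    have hX2I : X 2 ⊆ I := by
      intro v hv
      rcases hmemIC v with h | h
      · exact absurd ⟨v, hv, z, hz, (hzadj z (hX4I hz) v h).symm⟩ hno24
      · exact h
    have hX3I : X 3 ⊆ I := by
      intro v hv
      rcases hmemIC v with h | h
      · exact absurd ⟨v, hv, z, hz, (hzadj z (hX4I hz) v h).symm⟩ hno34
      · exact h
    have h23 : ∃ x ∈ X 2, ∃ y ∈ X 3, G.Adj x y := by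
      rw [hiff 2 3 (by decide), fh_adj]; decide
    obtain ⟨a, ha, b, hb, hadj⟩ := h23
    exact hI a (hX2I ha) b (hX3I hb) hadj

lemma caseC_core {V : Type} [Fintype V] (G : SimpleGraph V) (C I N : Set V)
    (hpart : C ∪ I = Set.univ)
    (hCconn : (G.induce C).Connected)
    (hdeg : ∀ x ∈ C, {y | y ∈ C ∧ G.Adj x y}.ncard = 2)
    (hNdef : ∀ z ∈ I, ∀ y, G.Adj z y ↔ y ∈ N)
    (hN2 : N.ncard ≤ 2)
    (X : Fin 5 → Set V) (hm : IsIMModel G fullHouse X)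
    (k m1 m2 m3 : Fin 5)
    (hkm1 : k ≠ m1) (hkm2 : k ≠ m2) (hkm3 : k ≠ m3)
    (hm12 : m1 ≠ m2) (hm13 : m1 ≠ m3) (hm23 : m2 ≠ m3)
    (ha1 : fullHouse.Adj k m1) (ha2 : fullHouse.Adj k m2) (ha3 : fullHouse.Adj k m3)
    (hkN : ∀ v ∈ X k, v ∉ N) : False := by
  obtain ⟨hne, hdisjX, hconnX, hiff⟩ := hm
  have hmemIC : ∀ v : V, v ∈ C ∨ v ∈ I := by
    intro v
    have : v ∈ C ∪ I := by rw [hpart]; exact Set.mem_univ v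
    exact this
  have he1 : ∃ x ∈ X k, ∃ y ∈ X m1, G.Adj x y := (hiff k m1 hkm1).mpr ha1
  have he2 : ∃ x ∈ X k, ∃ y ∈ X m2, G.Adj x y := (hiff k m2 hkm2).mpr ha2
  have he3 : ∃ x ∈ X k, ∃ y ∈ X m3, G.Adj x y := (hiff k m3 hkm3).mpr ha3
  by_cases hXI : ∃ z, z ∈ X k ∧ z ∈ I
  · obtain ⟨z, hzX, hzI⟩ := hXI
    have hXk : ∀ v ∈ X k, v = z := by
      intro v hv
      by_contra hvz
      obtain ⟨b, hb, _, hadj⟩ :=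
        exists_adj_in_connected G (hconnX k) hzX hv (fun h => hvz h.symm)
      exact hkN b hb ((hNdef z hzI b).mp hadj)
    have hyN : ∀ m : Fin 5, (∃ x ∈ X k, ∃ y ∈ X m, G.Adj x y) →
        ∃ y ∈ X m, y ∈ N := by
      rintro m ⟨x, hx, y, hy, hadj⟩
      rw [hXk x hx] at hadj
      exact ⟨y, hy, (hNdef z hzI y).mp hadj⟩
    obtain ⟨y1, hy1, hy1N⟩ := hyN m1 he1
    obtain ⟨y2, hy2, hy2N⟩ := hyN m2 he2
    obtain ⟨y3, hy3, hy3N⟩ := hyN m3 he3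
    have h12 : y1 ≠ y2 := fun h => Set.disjoint_left.mp (hdisjX m1 m2 hm12) hy1 (h ▸ hy2)
    have h13 : y1 ≠ y3 := fun h => Set.disjoint_left.mp (hdisjX m1 m3 hm13) hy1 (h ▸ hy3)
    have h23 : y2 ≠ y3 := fun h => Set.disjoint_left.mp (hdisjX m2 m3 hm23) hy2 (h ▸ hy3)
    have := three_distinct_ncard hy1N hy2N hy3N h12 h13 h23
    omega
  · push_neg at hXI
    have hXkC : X k ⊆ C := by
      intro v hv
      rcases hmemIC v with h | h
      · exact h
      · exact absurd h (hXI v hv)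
    have hwit : ∀ m : Fin 5, (∃ x ∈ X k, ∃ y ∈ X m, G.Adj x y) →
        ∃ y ∈ X m ∩ C, ∃ x ∈ X k, G.Adj y x := by
      rintro m ⟨x, hx, y, hy, hadj⟩
      rcases hmemIC y with h | h
      · exact ⟨y, ⟨hy, h⟩, x, hx, hadj.symm⟩
      · exact absurd ((hNdef y h x).mp hadj.symm) (hkN x hx)
    exact pigeon G hCconn hdeg hXkC (hne k) (hconnX k)
      (Set.inter_subset_right) (Set.inter_subset_right) (Set.inter_subset_right)
      ((hdisjX m1 k hkm1.symm).mono_left Set.inter_subset_left)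
      ((hdisjX m2 k hkm2.symm).mono_left Set.inter_subset_left)
      ((hdisjX m3 k hkm3.symm).mono_left Set.inter_subset_left)
      ((hdisjX m1 m2 hm12).mono Set.inter_subset_left Set.inter_subset_left)
      ((hdisjX m1 m3 hm13).mono Set.inter_subset_left Set.inter_subset_left)
      ((hdisjX m2 m3 hm23).mono Set.inter_subset_left Set.inter_subset_left)
      (hwit m1 he1) (hwit m2 he2) (hwit m3 he3)

lemma caseC {V : Type} [Fintype V] (G : SimpleGraph V) (C I N : Set V)
    (hpart : C ∪ I = Set.univ)
    (hCconn : (G.induce C).Connected)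
    (hdeg : ∀ x ∈ C, {y | y ∈ C ∧ G.Adj x y}.ncard = 2)
    (hNdef : ∀ z ∈ I, ∀ y, G.Adj z y ↔ y ∈ N)
    (hN2 : N.ncard ≤ 2)
    (X : Fin 5 → Set V) (hm : IsIMModel G fullHouse X) : False := by
  by_cases h0 : ∃ v ∈ X 0, v ∈ N
  · by_cases h1 : ∃ v ∈ X 1, v ∈ N
    · by_cases h2 : ∃ v ∈ X 2, v ∈ N
      · obtain ⟨v0, hv0, hv0N⟩ := h0
        obtain ⟨v1, hv1, hv1N⟩ := h1
        obtain ⟨v2, hv2, hv2N⟩ := h2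
        have hd01 := hm.2.1 0 1 (by decide)
        have hd02 := hm.2.1 0 2 (by decide)
        have hd12 := hm.2.1 1 2 (by decide)
        have e01 : v0 ≠ v1 := fun h => Set.disjoint_left.mp hd01 hv0 (h ▸ hv1)
        have e02 : v0 ≠ v2 := fun h => Set.disjoint_left.mp hd02 hv0 (h ▸ hv2)
        have e12 : v1 ≠ v2 := fun h => Set.disjoint_left.mp hd12 hv1 (h ▸ hv2)
        have := three_distinct_ncard hv0N hv1N hv2N e01 e02 e12
        omega
      · push_neg at h2
        exact caseC_core G C I N hpart hCconn hdeg hNdef hN2 X hm 2 0 1 3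
          (by decide) (by decide) (by decide) (by decide) (by decide) (by decide)
          (by rw [fh_adj]; decide) (by rw [fh_adj]; decide) (by rw [fh_adj]; decide) h2
    · push_neg at h1
      exact caseC_core G C I N hpart hCconn hdeg hNdef hN2 X hm 1 0 2 3
        (by decide) (by decide) (by decide) (by decide) (by decide) (by decide)
        (by rw [fh_adj]; decide) (by rw [fh_adj]; decide) (by rw [fh_adj]; decide) h1
  · push_neg at h0
    exact caseC_core G C I N hpart hCconn hdeg hNdef hN2 X hm 0 1 2 3
      (by decide) (by decide) (by decide) (by decide) (by decide) (by decide)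
      (by rw [fh_adj]; decide) (by rw [fh_adj]; decide) (by rw [fh_adj]; decide) h0

lemma caseA {V : Type} [Fintype V] (G : SimpleGraph V) (C I : Set V)
    (hpart : C ∪ I = Set.univ)
    (hCconn : (G.induce C).Connected)
    (hdeg : ∀ x ∈ C, {y | y ∈ C ∧ G.Adj x y}.ncard = 2)
    (hI1 : I.ncard ≤ 1)
    (X : Fin 5 → Set V) (hm : IsIMModel G fullHouse X) : False := by
  obtain ⟨hne, hdisjX, hconnX, hiff⟩ := hm
  have hmemIC : ∀ v : V, v ∈ C ∨ v ∈ I := by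
    intro v
    have : v ∈ C ∪ I := by rw [hpart]; exact Set.mem_univ v
    exact this
  have hone : ∀ a b : Fin 5, a ≠ b → ¬ X a ⊆ C → ¬ X b ⊆ C → False := by
    intro a b hab ha hb
    obtain ⟨va, hva, hvaC⟩ : ∃ v, v ∈ X a ∧ v ∉ C := by
      by_contra h
      push_neg at h
      exact ha h
    obtain ⟨vb, hvb, hvbC⟩ : ∃ v, v ∈ X b ∧ v ∉ C := by
      by_contra h
      push_neg at h
      exact hb h
    have hvaI : va ∈ I := (hmemIC va).resolve_left hvaC
    have hvbI : vb ∈ I := (hmemIC vb).resolve_left hvbC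
    have hvab : va ≠ vb := fun h => Set.disjoint_left.mp (hdisjX a b hab) hva (h ▸ hvb)
    have hsub : ({va, vb} : Set V) ⊆ I := by rintro v (rfl | rfl) <;> assumption
    have : 2 ≤ I.ncard := by
      rw [← Set.ncard_pair hvab]
      exact Set.ncard_le_ncard hsub (Set.toFinite _)
    omega
  have core : ∀ k b1 b2 b3 : Fin 5, k ≠ b1 → k ≠ b2 → k ≠ b3 → b1 ≠ b2 → b1 ≠ b3 →
      b2 ≠ b3 → fullHouse.Adj k b1 → fullHouse.Adj k b2 → fullHouse.Adj k b3 →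
      X k ⊆ C → X b1 ⊆ C → X b2 ⊆ C → X b3 ⊆ C → False := by
    intro k b1 b2 b3 hk1 hk2 hk3 h12 h13 h23 ha1 ha2 ha3 hkC h1C h2C h3C
    have hw : ∀ m : Fin 5, k ≠ m → fullHouse.Adj k m →
        ∃ y ∈ X m, ∃ x ∈ X k, G.Adj y x := by
      intro m hkm ham
      obtain ⟨x, hx, y, hy, hadj⟩ := (hiff k m hkm).mpr ham
      exact ⟨y, hy, x, hx, hadj.symm⟩
    exact pigeon G hCconn hdeg hkC (hne k) (hconnX k) h1C h2C h3C
      (hdisjX b1 k hk1.symm) (hdisjX b2 k hk2.symm) (hdisjX b3 k hk3.symm)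
      (hdisjX b1 b2 h12) (hdisjX b1 b3 h13) (hdisjX b2 b3 h23)
      (hw b1 hk1 ha1) (hw b2 hk2 ha2) (hw b3 hk3 ha3)
  by_cases h0 : X 0 ⊆ C
  · by_cases h2 : X 2 ⊆ C
    · by_cases h3 : X 3 ⊆ C
      · by_cases h4 : X 4 ⊆ C
        · by_cases h1 : X 1 ⊆ C
          · exact core 0 1 2 3 (by decide) (by decide) (by decide) (by decide)
              (by decide) (by decide) (by rw [fh_adj]; decide) (by rw [fh_adj]; decide)
              (by rw [fh_adj]; decide) h0 h1 h2 h3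
          · exact core 0 2 3 4 (by decide) (by decide) (by decide) (by decide)
              (by decide) (by decide) (by rw [fh_adj]; decide) (by rw [fh_adj]; decide)
              (by rw [fh_adj]; decide) h0 h2 h3 h4
        · have h1 : X 1 ⊆ C := by
            by_contra hh
            exact hone 1 4 (by decide) hh h4
          exact core 0 1 2 3 (by decide) (by decide) (by decide) (by decide)
            (by decide) (by decide) (by rw [fh_adj]; decide) (by rw [fh_adj]; decide)
            (by rw [fh_adj]; decide) h0 h1 h2 h3
      · have h1 : X 1 ⊆ C := by
          by_contra hh
          exact hone 1 3 (by decide) hh h3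
        have h4 : X 4 ⊆ C := by
          by_contra hh
          exact hone 4 3 (by decide) hh h3
        exact core 0 1 2 4 (by decide) (by decide) (by decide) (by decide)
          (by decide) (by decide) (by rw [fh_adj]; decide) (by rw [fh_adj]; decide)
          (by rw [fh_adj]; decide) h0 h1 h2 h4
    · have h1 : X 1 ⊆ C := by
        by_contra hh
        exact hone 1 2 (by decide) hh h2
      have h3 : X 3 ⊆ C := by
        by_contra hh
        exact hone 3 2 (by decide) hh h2
      have h4 : X 4 ⊆ C := by
        by_contra hh
        exact hone 4 2 (by decide) hh h2
      exact core 0 1 3 4 (by decide) (by decide) (by decide) (by decide)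
        (by decide) (by decide) (by rw [fh_adj]; decide) (by rw [fh_adj]; decide)
        (by rw [fh_adj]; decide) h0 h1 h3 h4
  · have h1 : X 1 ⊆ C := by
      by_contra hh
      exact hone 1 0 (by decide) hh h0
    have h2 : X 2 ⊆ C := by
      by_contra hh
      exact hone 2 0 (by decide) hh h0
    have h3 : X 3 ⊆ C := by
      by_contra hh
      exact hone 3 0 (by decide) hh h0
    have h4 : X 4 ⊆ C := by
      by_contra hh
      exact hone 4 0 (by decide) hh h0
    exact core 1 2 3 4 (by decide) (by decide) (by decide) (by decide)
      (by decide) (by decide) (by rw [fh_adj]; decide) (by rw [fh_adj]; decide)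
      (by rw [fh_adj]; decide) h1 h2 h3 h4

lemma two_of_ncard {V : Type} [Fintype V] {s : Set V} (h : 2 ≤ s.ncard) :
    ∃ a ∈ s, ∃ b ∈ s, a ≠ b := by
  obtain ⟨t, hts, htc⟩ := Set.exists_subset_card_eq h
  obtain ⟨a, b, hab, rfl⟩ := Set.ncard_eq_two.mp htc
  exact ⟨a, hts (by simp), b, hts (by simp), hab⟩

theorem stmt16_aux {V : Type} [Fintype V] (G : SimpleGraph V) (C I : Set V)
    (hpart : C ∪ I = Set.univ) (hdisj : Disjoint C I)
    (hC3 : 3 ≤ C.ncard)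
    (hCconn : (G.induce C).Connected)
    (hCdeg : ∀ x : C, ((G.induce C).neighborSet x).ncard = 2)
    (hI : ∀ x ∈ I, ∀ y ∈ I, ¬ G.Adj x y)
    (hIN : ∀ x ∈ I, G.neighborSet x ⊆ C)
    (hIsame : ∀ x ∈ I, ∀ y ∈ I, G.neighborSet x = G.neighborSet y) :
    (∃ X : Fin 5 → Set V, IsIMModel G fullHouse X) ↔
      2 ≤ I.ncard ∧
        (((∃ w ∈ C, ∀ z ∈ I, ¬ G.Adj w z) ∧ 4 ≤ C.ncard ∧
            ∀ z ∈ I, 3 ≤ (G.neighborSet z).ncard) ∨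
          ((∀ w ∈ C, ∃ z ∈ I, G.Adj w z) ∧ 5 ≤ C.ncard)) := by
  classical
  have hdeg' : ∀ x ∈ C, {y | y ∈ C ∧ G.Adj x y}.ncard = 2 := by
    intro x hx
    have h1 : {y | y ∈ C ∧ G.Adj x y} =
        Subtype.val '' ((G.induce C).neighborSet ⟨x, hx⟩) := by
      ext y
      constructor
      · rintro ⟨hyC, hadj⟩
        exact ⟨⟨y, hyC⟩, hadj, rfl⟩
      · rintro ⟨⟨y', hy'⟩, hadj, rfl⟩
        exact ⟨hy', hadj⟩
    rw [h1, Set.ncard_image_of_injective _ Subtype.val_injective]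
    exact hCdeg ⟨x, hx⟩
  constructor
  · rintro ⟨X, hmod⟩
    have hI2 : 2 ≤ I.ncard := by
      by_contra h
      push_neg at h
      exact caseA G C I hpart hCconn hdeg' (by omega) X hmod
    obtain ⟨z1, hz1, z2, hz2, hz12⟩ := two_of_ncard hI2
    set N := G.neighborSet z1 with hN_def
    have hNdef : ∀ z ∈ I, ∀ y, G.Adj z y ↔ y ∈ N := by
      intro z hz y
      have heq : G.neighborSet z = G.neighborSet z1 := hIsame z hz z1 hz1
      constructor
      · intro h
        have h2 : y ∈ G.neighborSet z := h
        rw [heq] at h2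
        exact h2
      · intro h
        have h2 : y ∈ G.neighborSet z1 := h
        rw [← heq] at h2
        exact h2
    have hNC : N ⊆ C := hIN z1 hz1
    by_cases hall : ∀ w ∈ C, ∃ z ∈ I, G.Adj w z
    · refine ⟨hI2, Or.inr ⟨hall, ?_⟩⟩
      by_contra h
      push_neg at h
      have hzadj : ∀ z ∈ I, ∀ w ∈ C, G.Adj z w := by
        intro z hz w hw
        obtain ⟨z', hz', hadj⟩ := hall w hw
        exact (hNdef z hz w).mpr ((hNdef z' hz' w).mp hadj.symm)
      exact caseB G C I hpart hdeg' hI hzadj (by omega) X hmod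
    · push_neg at hall
      obtain ⟨w, hw, hwz⟩ := hall
      have hdeg3 : ∀ z ∈ I, 3 ≤ (G.neighborSet z).ncard := by
        intro z hz
        by_contra hc
        push_neg at hc
        have hN2 : N.ncard ≤ 2 := by
          have heq : G.neighborSet z = G.neighborSet z1 := hIsame z hz z1 hz1
          rw [hN_def, ← heq]
          omega
        exact caseC G C I N hpart hCconn hdeg' hNdef hN2 X hmod
      have hwN : w ∉ N := fun h => hwz z1 hz1 ((hNdef z1 hz1 w).mpr h).symm
      refine ⟨hI2, Or.inl ⟨⟨w, hw, hwz⟩, ?_, hdeg3⟩⟩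
      have hsub : insert w N ⊆ C := Set.insert_subset hw hNC
      have h3 : 3 ≤ N.ncard := hdeg3 z1 hz1
      have h4 : (insert w N).ncard = N.ncard + 1 :=
        Set.ncard_insert_of_notMem hwN (Set.toFinite _)
      have h5 := Set.ncard_le_ncard hsub (Set.toFinite _)
      omega
  · rintro ⟨hI2, hcase⟩
    obtain ⟨z1, hz1, z2, hz2, hz12⟩ := two_of_ncard hI2
    set N := G.neighborSet z1 with hN_def
    have hNdef : ∀ z ∈ I, ∀ y, G.Adj z y ↔ y ∈ N := by
      intro z hz y
      have heq : G.neighborSet z = G.neighborSet z1 := hIsame z hz z1 hz1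
      constructor
      · intro h
        have h2 : y ∈ G.neighborSet z := h
        rw [heq] at h2
        exact h2
      · intro h
        have h2 : y ∈ G.neighborSet z1 := h
        rw [← heq] at h2
        exact h2
    have hNC : N ⊆ C := hIN z1 hz1
    rcases hcase with ⟨⟨w, hw, hwz⟩, _, hdeg3⟩ | ⟨hall, h5⟩
    · have hwN : w ∉ N := fun h => hwz z1 hz1 ((hNdef z1 hz1 w).mpr h).symm
      exact suffI G C I N hdisj hCconn hdeg' hz1 hz2 hz12 hNC (hdeg3 z1 hz1)
        (hNdef z1 hz1) (hNdef z2 hz2) hw hwN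
    · have hzadj : ∀ z ∈ I, ∀ w ∈ C, G.Adj z w := by
        intro z hz w hw
        obtain ⟨z', hz', hadj⟩ := hall w hw
        exact (hNdef z hz w).mpr ((hNdef z' hz' w).mp hadj.symm)
      exact suffII G C I hdisj hCconn hdeg' hz1 hz2 hz12 hzadj h5

/-- Let the vertex set of `G` be partitioned into `C` and `I` such that `G[C]` is a
cycle (connected and 2-regular, on at least 3 vertices), `I` is an independent set, and
all vertices of `I` have the same neighborhood, contained in `C`. Then the Full House
is an induced minor of `G` iff `|I| ≥ 2` and either (i) some vertex of `C` has no
neighbor in `I`, `|C| ≥ 4` and every vertex of `I` has degree at least `3`, or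
(ii) every vertex of `C` has a neighbor in `I` and `|C| ≥ 5`. -/
theorem stmt16 {V : Type} [Fintype V] (G : SimpleGraph V) (C I : Set V)
    (hpart : C ∪ I = Set.univ) (hdisj : Disjoint C I)
    (hC3 : 3 ≤ C.ncard)
    (hCconn : (G.induce C).Connected)
    (hCdeg : ∀ x : C, ((G.induce C).neighborSet x).ncard = 2)
    (hI : ∀ x ∈ I, ∀ y ∈ I, ¬ G.Adj x y)
    (hIN : ∀ x ∈ I, G.neighborSet x ⊆ C)
    (hIsame : ∀ x ∈ I, ∀ y ∈ I, G.neighborSet x = G.neighborSet y) :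
    IsInducedMinor fullHouse G ↔
      2 ≤ I.ncard ∧
        (((∃ w ∈ C, ∀ z ∈ I, ¬ G.Adj w z) ∧ 4 ≤ C.ncard ∧
            ∀ z ∈ I, 3 ≤ (G.neighborSet z).ncard) ∨
          ((∀ w ∈ C, ∃ z ∈ I, G.Adj w z) ∧ 5 ≤ C.ncard)) := by
  exact stmt16_aux G C I hpart hdisj hC3 hCconn hCdeg hI hIN hIsame
end
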